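/- arXiv:1404.0703 — 7 statements merged into one kernel-verified Lean document; each statement's English description precedes it below -/
import Mathlib

section
/- Completeness of geometric resolution: if the union of the boxes in a finite set A of n-dimensional dyadic boxes covers a dyadic box b (i.e. every point lying in b lies in some box of A), then there exists a geometric resolution derivation from A containing a box b′ that contains b. -/
/-- An `n`-dimensional dyadic box: each component is a binary string (a dyadic
interval), the empty string denoting the whole domain `{0,1}^d`. -/
abbrev DyadicBox (n : ℕ) := Fin n → List Bool

namespace DyadicBox

/-- `b'` contains `b` iff every component of `b'` is a prefix of the
corresponding component of `b`. -/
def Contains {n : ℕ} (b' b : DyadicBox n) : Prop := ∀ i, b' i <+: b i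

/-- A point at bit depth `d`: every component has length exactly `d`. -/
def IsPoint {n : ℕ} (d : ℕ) (p : DyadicBox n) : Prop := ∀ i, (p i).length = d

/-- A set of boxes `A` covers a box `b` at bit depth `d`: every point lying in
`b` lies in some box of `A`. -/
def Covers {n : ℕ} (d : ℕ) (A : Set (DyadicBox n)) (b : DyadicBox n) : Prop :=
  ∀ p : DyadicBox n, IsPoint d p → Contains b p → ∃ a ∈ A, Contains a p

/-- `w` is the geometric resolvent of `w₁` and `w₂` on coordinate `ℓ`:
the `ℓ`-th components are `x0` and `x1` and become `x`, and every other
component of `w` is the longer of the two (prefix-comparable) components. -/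
def IsResolvent {n : ℕ} (w₁ w₂ : DyadicBox n) (ℓ : Fin n) (w : DyadicBox n) : Prop :=
  (∃ x : List Bool, w₁ ℓ = x ++ [false] ∧ w₂ ℓ = x ++ [true] ∧ w ℓ = x) ∧
  ∀ j : Fin n, j ≠ ℓ →
    (w₁ j <+: w₂ j ∧ w j = w₂ j) ∨ (w₂ j <+: w₁ j ∧ w j = w₁ j)

/-- A (tagged) geometric resolution derivation from `A`: an entry tagged `true`
is the geometric resolvent of two earlier entries; an entry tagged `false` is
an axiom, i.e. belongs to `A`. -/
def IsDerivation {n : ℕ} (A : Set (DyadicBox n)) (L : List (Bool × DyadicBox n)) : Prop :=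
  ∀ k : Fin L.length,
    if (L.get k).1 then
      ∃ i j : Fin L.length, (i : ℕ) < (k : ℕ) ∧ (j : ℕ) < (k : ℕ) ∧
        ∃ ℓ : Fin n, IsResolvent ((L.get i).2) ((L.get j).2) ℓ ((L.get k).2)
    else (L.get k).2 ∈ A

/-- The number of resolution steps of a derivation. -/
def steps {n : ℕ} (L : List (Bool × DyadicBox n)) : ℕ := (L.filter (·.1)).length

/-- `z` is derivable from `A` by geometric resolutions: it occurs in some
geometric resolution derivation from `A`. -/
def Derivable {n : ℕ} (A : Set (DyadicBox n)) (z : DyadicBox n) : Prop :=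
  ∃ L : List (Bool × DyadicBox n), IsDerivation A L ∧ z ∈ L.map (·.2)

end DyadicBox

namespace DyadicBox

variable {n : ℕ} {A : Set (DyadicBox n)}

lemma derivable_ax {z : DyadicBox n} (hz : z ∈ A) : Derivable A z := by
  refine ⟨[(false, z)], ?_, by simp⟩
  intro k
  have : (k : ℕ) = 0 := Nat.lt_one_iff.1 k.2
  have hk : k = (⟨0, by simp⟩ : Fin ([(false, z)].length)) := Fin.ext this
  subst hk
  simpa using hz

lemma isDerivation_append {L₁ L₂ : List (Bool × DyadicBox n)}
    (h₁ : IsDerivation A L₁) (h₂ : IsDerivation A L₂) :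
    IsDerivation A (L₁ ++ L₂) := by
  intro k
  have hklt := k.2
  rcases lt_or_ge (k : ℕ) L₁.length with hk | hk
  · have e : (L₁ ++ L₂).get k = L₁.get ⟨k, hk⟩ := by
      simp [List.get_eq_getElem, List.getElem_append_left hk]
    rw [e]
    have h := h₁ ⟨k, hk⟩
    by_cases hbt : (L₁.get ⟨(k : ℕ), hk⟩).1
    · rw [if_pos hbt] at h ⊢
      obtain ⟨i, j, hi, hj, ℓ, hr⟩ := h
      have hlen : L₁.length ≤ (L₁ ++ L₂).length := by simp
      refine ⟨⟨i, lt_of_lt_of_le i.2 hlen⟩, ⟨j, lt_of_lt_of_le j.2 hlen⟩, hi, hj, ℓ, ?_⟩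
      have ei : (L₁ ++ L₂).get ⟨i, lt_of_lt_of_le i.2 hlen⟩ = L₁.get i := by
        simp [List.get_eq_getElem, List.getElem_append_left i.2]
      have ej : (L₁ ++ L₂).get ⟨j, lt_of_lt_of_le j.2 hlen⟩ = L₁.get j := by
        simp [List.get_eq_getElem, List.getElem_append_left j.2]
      rw [ei, ej]; exact hr
    · rw [if_neg hbt] at h ⊢; exact h
  · have hk2 : (k : ℕ) - L₁.length < L₂.length := by
      have := k.2; simp at this; omega
    have e : (L₁ ++ L₂).get k = L₂.get ⟨(k : ℕ) - L₁.length, hk2⟩ := by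
      simp [List.get_eq_getElem, List.getElem_append_right hk]
    rw [e]
    have h := h₂ ⟨(k : ℕ) - L₁.length, hk2⟩
    by_cases hbt : (L₂.get ⟨(k : ℕ) - L₁.length, hk2⟩).1
    · rw [if_pos hbt] at h ⊢
      obtain ⟨i, j, hi, hj, ℓ, hr⟩ := h
      have hilt : L₁.length + (i : ℕ) < (L₁ ++ L₂).length := by
        have := i.2; simp only [List.length_append]; omega
      have hjlt : L₁.length + (j : ℕ) < (L₁ ++ L₂).length := by
        have := j.2; simp only [List.length_append]; omega
      have hi' : (i : ℕ) < (k : ℕ) - L₁.length := hi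
      have hj' : (j : ℕ) < (k : ℕ) - L₁.length := hj
      refine ⟨⟨L₁.length + i, hilt⟩, ⟨L₁.length + j, hjlt⟩,
        show L₁.length + (i : ℕ) < (k : ℕ) by omega,
        show L₁.length + (j : ℕ) < (k : ℕ) by omega, ℓ, ?_⟩
      have ei : (L₁ ++ L₂).get ⟨L₁.length + i, hilt⟩ = L₂.get i := by
        simp [List.get_eq_getElem, List.getElem_append_right (Nat.le_add_right _ _)]
      have ej : (L₁ ++ L₂).get ⟨L₁.length + j, hjlt⟩ = L₂.get j := by
        simp [List.get_eq_getElem, List.getElem_append_right (Nat.le_add_right _ _)]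
      rw [ei, ej]; exact hr
    · rw [if_neg hbt] at h ⊢; exact h

lemma derivable_res {z₁ z₂ w : DyadicBox n} {ℓ : Fin n}
    (h₁ : Derivable A z₁) (h₂ : Derivable A z₂) (hr : IsResolvent z₁ z₂ ℓ w) :
    Derivable A w := by
  obtain ⟨L₁, hL₁, hz₁⟩ := h₁
  obtain ⟨L₂, hL₂, hz₂⟩ := h₂
  set L := L₁ ++ L₂ with hLdef
  have hL : IsDerivation A L := isDerivation_append hL₁ hL₂
  obtain ⟨p₁, hp₁, e₁⟩ := List.mem_map.1 hz₁
  obtain ⟨p₂, hp₂, e₂⟩ := List.mem_map.1 hz₂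
  obtain ⟨i₁, hi₁, g₁⟩ := List.mem_iff_getElem.1 (show p₁ ∈ L from List.mem_append_left _ hp₁)
  obtain ⟨i₂, hi₂, g₂⟩ := List.mem_iff_getElem.1 (show p₂ ∈ L from List.mem_append_right _ hp₂)
  refine ⟨L ++ [(true, w)], ?_, by simp⟩
  intro k
  have hklt := k.2
  rcases lt_or_ge (k : ℕ) L.length with hk | hk
  · -- same as in append lemma, first case
    have e : (L ++ [(true, w)]).get k = L.get ⟨k, hk⟩ := by
      simp [List.get_eq_getElem, List.getElem_append_left hk]
    rw [e]
    have h := hL ⟨k, hk⟩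
    by_cases hbt : (L.get ⟨(k : ℕ), hk⟩).1
    · rw [if_pos hbt] at h ⊢
      obtain ⟨i, j, hi, hj, ℓ', hr'⟩ := h
      have hlen : L.length ≤ (L ++ [(true, w)]).length := by simp
      refine ⟨⟨i, lt_of_lt_of_le i.2 hlen⟩, ⟨j, lt_of_lt_of_le j.2 hlen⟩, hi, hj, ℓ', ?_⟩
      have ei : (L ++ [(true, w)]).get ⟨i, lt_of_lt_of_le i.2 hlen⟩ = L.get i := by
        simp [List.get_eq_getElem, List.getElem_append_left i.2]
      have ej : (L ++ [(true, w)]).get ⟨j, lt_of_lt_of_le j.2 hlen⟩ = L.get j := by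
        simp [List.get_eq_getElem, List.getElem_append_left j.2]
      rw [ei, ej]; exact hr'
    · rw [if_neg hbt] at h ⊢; exact h
  · -- k is the last position
    have hkeq : (k : ℕ) = L.length := by
      have := k.2; simp at this; omega
    have e : (L ++ [(true, w)]).get k = (true, w) := by
      simp [List.get_eq_getElem, List.getElem_append_right hk, hkeq]
    rw [e]
    simp only [if_pos]
    have hlen : L.length < (L ++ [(true, w)]).length := by simp
    refine ⟨⟨i₁, lt_trans hi₁ hlen⟩, ⟨i₂, lt_trans hi₂ hlen⟩,
      show i₁ < (k : ℕ) by omega, show i₂ < (k : ℕ) by omega, ℓ, ?_⟩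
    have ei : (L ++ [(true, w)]).get ⟨i₁, lt_trans hi₁ hlen⟩ = L[i₁] := by
      simp [List.get_eq_getElem, List.getElem_append_left hi₁]
    have ej : (L ++ [(true, w)]).get ⟨i₂, lt_trans hi₂ hlen⟩ = L[i₂] := by
      simp [List.get_eq_getElem, List.getElem_append_left hi₂]
    rw [ei, ej, g₁, g₂, e₁, e₂]
    exact hr




lemma main_aux {n : ℕ} (d : ℕ) (A : Set (DyadicBox n)) :
    ∀ N : ℕ, ∀ b : DyadicBox n, (∀ i, (b i).length ≤ d) →
      (∑ i, (d - (b i).length)) ≤ N → Covers d A b →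
      ∃ b', Derivable A b' ∧ Contains b' b := by
  intro N
  induction N with
  | zero =>
    intro b hb hsum hcov
    have hpt : IsPoint d b := by
      intro i
      have h1 : d - (b i).length = 0 :=
        Finset.sum_eq_zero_iff.1 (Nat.le_zero.1 hsum) i (Finset.mem_univ i)
      have := hb i; omega
    obtain ⟨a, ha, hab⟩ := hcov b hpt (fun i => List.prefix_refl _)
    exact ⟨a, derivable_ax ha, hab⟩
  | succ N ih =>
    intro b hb hsum hcov
    by_cases hpt : IsPoint d b
    · obtain ⟨a, ha, hab⟩ := hcov b hpt (fun i => List.prefix_refl _)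
      exact ⟨a, derivable_ax ha, hab⟩
    · simp only [IsPoint, not_forall] at hpt
      obtain ⟨ℓ, hℓ⟩ := hpt
      have hℓd : (b ℓ).length < d := lt_of_le_of_ne (hb ℓ) hℓ
      classical
      have key : ∀ c : Bool, ∃ b', Derivable A b' ∧
          Contains b' (Function.update b ℓ (b ℓ ++ [c])) := by
        intro c
        set b0 := Function.update b ℓ (b ℓ ++ [c]) with hb0
        apply ih
        · intro i
          by_cases h : i = ℓ
          · subst h
            simp only [hb0, Function.update_self, List.length_append, List.length_cons,
              List.length_nil]
            omega
          · simpa only [hb0, Function.update_of_ne h] using hb i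
        · have he : (fun i => d - (b0 i).length) =
              Function.update (fun i => d - (b i).length) ℓ (d - (b ℓ ++ [c]).length) := by
            funext i
            exact Function.apply_update (fun _ x => d - (List.length x)) b ℓ (b ℓ ++ [c]) i
          have h1 : ∑ i, (d - (b0 i).length)
              = (d - (b ℓ ++ [c]).length) + ∑ i ∈ Finset.univ \ {ℓ}, (d - (b i).length) := by
            calc ∑ i, (d - (b0 i).length)
                = ∑ i, Function.update (fun i => d - (b i).length) ℓ
                    (d - (b ℓ ++ [c]).length) i := by rw [← he]
              _ = _ := Finset.sum_update_of_mem (Finset.mem_univ ℓ) _ _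
          have h2 : ∑ i, (d - (b i).length)
              = (d - (b ℓ).length) + ∑ i ∈ Finset.univ \ {ℓ}, (d - (b i).length) := by
            rw [Finset.sdiff_singleton_eq_erase]
            exact (Finset.add_sum_erase _ _ (Finset.mem_univ ℓ)).symm
          have h3 : (b ℓ ++ [c]).length = (b ℓ).length + 1 := by simp
          omega
        · intro p hp hbp
          apply hcov p hp
          intro i
          by_cases h : i = ℓ
          · subst h
            have := hbp i
            rw [hb0, Function.update_self] at this
            exact (List.prefix_append _ _).trans this
          · have := hbp i
            rwa [hb0, Function.update_of_ne h] at this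
      obtain ⟨c0, hc0d, hc0⟩ := key false
      obtain ⟨c1, hc1d, hc1⟩ := key true
      have hc0b : ∀ j, j ≠ ℓ → c0 j <+: b j := fun j h => by
        have := hc0 j; rwa [Function.update_of_ne h] at this
      have hc1b : ∀ j, j ≠ ℓ → c1 j <+: b j := fun j h => by
        have := hc1 j; rwa [Function.update_of_ne h] at this
      by_cases h0 : c0 ℓ <+: b ℓ
      · refine ⟨c0, hc0d, fun i => ?_⟩
        by_cases h : i = ℓ
        · subst h; exact h0
        · exact hc0b i h
      by_cases h1 : c1 ℓ <+: b ℓ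
      · refine ⟨c1, hc1d, fun i => ?_⟩
        by_cases h : i = ℓ
        · subst h; exact h1
        · exact hc1b i h
      have eq0 : c0 ℓ = b ℓ ++ [false] := by
        have hp : c0 ℓ <+: b ℓ ++ [false] := by
          have := hc0 ℓ; rwa [Function.update_self] at this
        rcases lt_or_ge (c0 ℓ).length (b ℓ ++ [false]).length with hl | hl
        · exact absurd (List.prefix_of_prefix_length_le hp (List.prefix_append _ _)
            (by simp only [List.length_append, List.length_cons, List.length_nil] at hl; omega)) h0
        · exact hp.eq_of_length (le_antisymm hp.length_le hl)
      have eq1 : c1 ℓ = b ℓ ++ [true] := by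
        have hp : c1 ℓ <+: b ℓ ++ [true] := by
          have := hc1 ℓ; rwa [Function.update_self] at this
        rcases lt_or_ge (c1 ℓ).length (b ℓ ++ [true]).length with hl | hl
        · exact absurd (List.prefix_of_prefix_length_le hp (List.prefix_append _ _)
            (by simp only [List.length_append, List.length_cons, List.length_nil] at hl; omega)) h1
        · exact hp.eq_of_length (le_antisymm hp.length_le hl)
      set w : DyadicBox n :=
        Function.update (fun j => if c0 j <+: c1 j then c1 j else c0 j) ℓ (b ℓ) with hw
      have hres : IsResolvent c0 c1 ℓ w := by
        constructor
        · exact ⟨b ℓ, eq0, eq1, by rw [hw, Function.update_self]⟩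
        · intro j hj
          rw [hw, Function.update_of_ne hj]
          by_cases h : c0 j <+: c1 j
          · exact Or.inl ⟨h, if_pos h⟩
          · refine Or.inr ⟨?_, if_neg h⟩
            rcases List.prefix_or_prefix_of_prefix (hc0b j hj) (hc1b j hj) with h' | h'
            · exact absurd h' h
            · exact h'
      refine ⟨w, derivable_res hc0d hc1d hres, fun i => ?_⟩
      by_cases h : i = ℓ
      · subst h; rw [hw, Function.update_self]
      · rw [hw, Function.update_of_ne h]
        by_cases hc : c0 i <+: c1 i
        · rw [if_pos hc]; exact hc1b i h
        · rw [if_neg hc]; exact hc0b i h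


end DyadicBox

/-- Completeness of geometric resolution: if a finite set `A` of dyadic boxes
covers a dyadic box `b`, then some box containing `b` is derivable from `A`
by geometric resolutions. -/
theorem geometric_resolution_complete (n d : ℕ) (hn : 1 ≤ n)
    (A : Finset (DyadicBox n)) (hA : ∀ a ∈ A, ∀ i, (a i).length ≤ d)
    (b : DyadicBox n) (hb : ∀ i, (b i).length ≤ d)
    (hcov : DyadicBox.Covers d (↑A) b) :
    ∃ b' : DyadicBox n, DyadicBox.Derivable (↑A) b' ∧ DyadicBox.Contains b' b := by
  exact DyadicBox.main_aux d (↑A) (∑ i, (d - (b i).length)) b hb le_rfl hcov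
end

section
/- If w_1 and w_2 are dyadic boxes that are geometrically resolvable on some coordinate and the union of their supports has size at most 2, then their geometric resolvent contains w_1 or contains w_2. -/
/-- If two dyadic boxes whose supports jointly span at most 2 coordinates are
geometrically resolvable, then their resolvent contains one of them. -/
theorem resolvent_contains_of_support_le_two (n : ℕ)
    (w₁ w₂ w : DyadicBox n) (ℓ : Fin n)
    (hres : DyadicBox.IsResolvent w₁ w₂ ℓ w)
    (hsupp : (Finset.univ.filter
        (fun j : Fin n => w₁ j ≠ [] ∨ w₂ j ≠ [])).card ≤ 2) :
    DyadicBox.Contains w w₁ ∨ DyadicBox.Contains w w₂ := by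
  obtain ⟨⟨x, hx1, hx2, hxw⟩, hoth⟩ := hres
  set S := Finset.univ.filter (fun j : Fin n => w₁ j ≠ [] ∨ w₂ j ≠ []) with hS
  have hℓS : ℓ ∈ S := by
    simp [hS, hx1]
  by_cases h : ∀ j, j ≠ ℓ → w j <+: w₁ j
  · left
    intro i
    by_cases hi : i = ℓ
    · subst hi; rw [hxw, hx1]; exact ⟨[false], rfl⟩
    · exact h i hi
  · push_neg at h
    obtain ⟨j₀, hj₀ℓ, hnp⟩ := h
    have hcase : w₁ j₀ <+: w₂ j₀ ∧ w j₀ = w₂ j₀ := by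
      rcases hoth j₀ hj₀ℓ with hc | hc
      · exact hc
      · exact absurd (hc.2 ▸ List.prefix_refl _) hnp
    have hwne : w₂ j₀ ≠ [] := by
      intro he
      exact hnp (by rw [hcase.2, he]; exact List.nil_prefix)
    have hj₀S : j₀ ∈ S := by simp [hS, hwne]
    have hsub : S ⊆ ({ℓ, j₀} : Finset (Fin n)) := by
      apply Finset.subset_of_eq
      symm
      apply Finset.eq_of_subset_of_card_le
      · intro i hi
        rcases Finset.mem_insert.mp hi with h | h
        · exact h ▸ hℓS
        · exact (Finset.mem_singleton.mp h) ▸ hj₀S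
      · calc S.card ≤ 2 := hsupp
          _ = ({ℓ, j₀} : Finset (Fin n)).card := by
            rw [Finset.card_insert_of_notMem (by simpa using (Ne.symm hj₀ℓ)),
              Finset.card_singleton]
    right
    intro i
    by_cases hi : i = ℓ
    · subst hi; rw [hxw, hx2]; exact ⟨[true], rfl⟩
    by_cases hi2 : i = j₀
    · subst hi2; rw [hcase.2]
    · have hiS : i ∉ S := fun hmem => by
        rcases Finset.mem_insert.mp (hsub hmem) with h | h
        · exact hi h
        · exact hi2 (Finset.mem_singleton.mp h)
      have : w₁ i = [] ∧ w₂ i = [] := by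
        by_contra hc
        exact hiS (by simp [hS]; tauto)
      have hwz : w i = [] := by
        rcases hoth i hi with hc | hc
        · rw [hc.2, this.2]
        · rw [hc.2, this.1]
      rw [hwz]; exact List.nil_prefix
end

section
/- Let A and A′ be sets of dyadic boxes such that every box of A is contained in some box of A′. If a box z is derivable from A by a geometric resolution derivation with r resolution steps, then there exists a box z′ containing z that is derivable from A′ by a geometric resolution derivation with at most r resolution steps. -/
/-!
Replay the derivation from `A` entry by entry, maintaining for every box derived so far a box
of the new derivation from `A'` that contains it. An axiom `a ∈ A` is replaced by a box of `A'`
containing it. For a resolvent `w` of `w₁, w₂` on coordinate `ℓ`, with `w₁ ℓ = x0`, `w₂ ℓ = x1`,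
take the containing boxes `w₁', w₂'`: the prefix `w₁' ℓ` of `x0` is either a prefix of `x`, and
then `w₁'` already contains `w`, or it is `x0` itself; likewise for `w₂'`. In the remaining case
`w₁'` and `w₂'` are resolvable on `ℓ` (off `ℓ` their components are prefixes of those of `w`,
hence comparable), and their resolvent contains `w`. So each step of the old derivation costs
at most one step of the new one.
-/

theorem List.take_max_length_of_prefix {α : Type*} {s t u : List α}
    (hs : s <+: u) (ht : t <+: u) :
    (s <+: t ∧ u.take (max s.length t.length) = t) ∨
      (t <+: s ∧ u.take (max s.length t.length) = s) := by
  rcases le_total s.length t.length with h | h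
  · refine Or.inl ⟨List.prefix_of_prefix_length_le hs ht h, ?_⟩
    rw [max_eq_right h, ← List.prefix_iff_eq_take.mp ht]
  · refine Or.inr ⟨List.prefix_of_prefix_length_le ht hs h, ?_⟩
    rw [max_eq_left h, ← List.prefix_iff_eq_take.mp hs]

namespace DyadicBox

variable {n : ℕ}

namespace IsResolvent

variable {w₁ w₂ w : DyadicBox n} {ℓ : Fin n}

theorem left_prefix (h : IsResolvent w₁ w₂ ℓ w) {j : Fin n} (hj : j ≠ ℓ) : w₁ j <+: w j := by
  rcases h.2 j hj with ⟨hp, he⟩ | ⟨-, he⟩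
  · rw [he]; exact hp
  · rw [he]

theorem right_prefix (h : IsResolvent w₁ w₂ ℓ w) {j : Fin n} (hj : j ≠ ℓ) : w₂ j <+: w j := by
  rcases h.2 j hj with ⟨-, he⟩ | ⟨hp, he⟩
  · rw [he]
  · rw [he]; exact hp

theorem contains_of_contains_left (h : IsResolvent w₁ w₂ ℓ w) {w₁' : DyadicBox n}
    (h₁ : Contains w₁' w₁) (hℓ : w₁' ℓ <+: w ℓ) : Contains w₁' w := by
  intro j
  by_cases hj : j = ℓ
  · exact hj ▸ hℓ
  · exact (h₁ j).trans (h.left_prefix hj)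

theorem contains_of_contains_right (h : IsResolvent w₁ w₂ ℓ w) {w₂' : DyadicBox n}
    (h₂ : Contains w₂' w₂) (hℓ : w₂' ℓ <+: w ℓ) : Contains w₂' w := by
  intro j
  by_cases hj : j = ℓ
  · exact hj ▸ hℓ
  · exact (h₂ j).trans (h.right_prefix hj)

theorem exists_contains (h : IsResolvent w₁ w₂ ℓ w) {w₁' w₂' : DyadicBox n}
    (h₁ : Contains w₁' w₁) (h₂ : Contains w₂' w₂) :
    Contains w₁' w ∨ Contains w₂' w ∨ ∃ w', IsResolvent w₁' w₂' ℓ w' ∧ Contains w' w := by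
  obtain ⟨x, hx₁, hx₂, hx⟩ := h.1
  have p₁ := h₁ ℓ
  have p₂ := h₂ ℓ
  rw [hx₁, List.prefix_concat_iff] at p₁
  rw [hx₂, List.prefix_concat_iff] at p₂
  rcases p₁ with e₁ | p₁
  swap
  · exact Or.inl (h.contains_of_contains_left h₁ (hx ▸ p₁))
  rcases p₂ with e₂ | p₂
  swap
  · exact Or.inr (Or.inl (h.contains_of_contains_right h₂ (hx ▸ p₂)))
  -- off `ℓ`, the longer of `w₁' j` and `w₂' j`, both prefixes of `w j`
  refine Or.inr (Or.inr ⟨fun j => if j = ℓ then x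
    else (w j).take (max (w₁' j).length (w₂' j).length), ⟨⟨x, e₁, e₂, if_pos rfl⟩, ?_⟩, ?_⟩)
  · intro j hj
    simp only [if_neg hj]
    exact List.take_max_length_of_prefix ((h₁ j).trans (h.left_prefix hj))
      ((h₂ j).trans (h.right_prefix hj))
  · intro j
    by_cases hj : j = ℓ
    · simp only [hj, if_true, hx, List.prefix_refl]
    · simp only [if_neg hj]
      exact List.take_prefix _ _

end IsResolvent

def IsDerivationStep (A : Set (DyadicBox n)) (L : List (Bool × DyadicBox n))
    (e : Bool × DyadicBox n) : Prop :=
  if e.1 then ∃ w₁ ∈ L.map (·.2), ∃ w₂ ∈ L.map (·.2), ∃ ℓ, IsResolvent w₁ w₂ ℓ e.2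
  else e.2 ∈ A

variable {A A' : Set (DyadicBox n)}

theorem mem_map_take_iff {L : List (Bool × DyadicBox n)} {k : ℕ} {w : DyadicBox n} :
    w ∈ (L.take k).map (·.2) ↔ ∃ i : Fin L.length, (i : ℕ) < k ∧ (L.get i).2 = w := by
  simp only [List.mem_map, List.mem_take_iff_getElem, Fin.exists_iff, List.get_eq_getElem]
  constructor
  · rintro ⟨e, ⟨i, hi, rfl⟩, rfl⟩
    exact ⟨i, by omega, by omega, rfl⟩
  · rintro ⟨i, hiL, hik, rfl⟩
    exact ⟨_, ⟨i, by omega, rfl⟩, rfl⟩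

theorem isDerivation_iff_take {L : List (Bool × DyadicBox n)} :
    IsDerivation A L ↔ ∀ k (hk : k < L.length), IsDerivationStep A (L.take k) L[k] := by
  rw [IsDerivation, Fin.forall_iff]
  refine forall_congr' fun k => forall_congr' fun hk => ?_
  simp only [IsDerivationStep, List.get_eq_getElem]
  by_cases hb : L[k].1
  · simp only [hb, if_true, ← List.get_eq_getElem, mem_map_take_iff]
    constructor
    · rintro ⟨i, j, hi, hj, ℓ, h⟩
      exact ⟨_, ⟨i, hi, rfl⟩, _, ⟨j, hj, rfl⟩, ℓ, h⟩
    · rintro ⟨_, ⟨i, hi, rfl⟩, _, ⟨j, hj, rfl⟩, ℓ, h⟩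
      exact ⟨i, j, hi, hj, ℓ, h⟩
  · simp only [hb, Bool.false_eq_true, if_false]

theorem isDerivation_concat_iff {L : List (Bool × DyadicBox n)} {e : Bool × DyadicBox n} :
    IsDerivation A (L ++ [e]) ↔ IsDerivation A L ∧ IsDerivationStep A L e := by
  simp only [isDerivation_iff_take, List.length_append, List.length_singleton,
    Nat.forall_lt_succ_right']
  refine and_congr (forall₂_congr fun k hk => ?_) ?_
  · rw [List.take_append_of_le_length hk.le, List.getElem_append_left hk]
  · simp

theorem isDerivation_nil : IsDerivation A [] := fun k => k.elim0

theorem steps_concat (L : List (Bool × DyadicBox n)) (e : Bool × DyadicBox n) :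
    steps (L ++ [e]) = steps L + if e.1 then 1 else 0 := by
  cases hb : e.1 <;> simp [steps, List.filter_append, hb]

theorem IsDerivationStep.lift (hAA' : ∀ a ∈ A, ∃ a' ∈ A', Contains a' a)
    {L L' : List (Bool × DyadicBox n)}
    (hLL' : ∀ b ∈ L.map (·.2), ∃ b' ∈ L'.map (·.2), Contains b' b)
    {e : Bool × DyadicBox n} (he : IsDerivationStep A L e) :
    (∃ b' ∈ L'.map (·.2), Contains b' e.2) ∨
      ∃ b', IsDerivationStep A' L' (e.1, b') ∧ Contains b' e.2 := by
  obtain ⟨_ | _, b⟩ := e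
  · obtain ⟨a', ha', hc⟩ := hAA' b he
    exact Or.inr ⟨a', ha', hc⟩
  · obtain ⟨w₁, hw₁, w₂, hw₂, ℓ, hres⟩ := he
    obtain ⟨w₁', hw₁', h₁⟩ := hLL' w₁ hw₁
    obtain ⟨w₂', hw₂', h₂⟩ := hLL' w₂ hw₂
    rcases hres.exists_contains h₁ h₂ with h | h | ⟨w', hres', hw'⟩
    · exact Or.inl ⟨w₁', hw₁', h⟩
    · exact Or.inl ⟨w₂', hw₂', h⟩
    · exact Or.inr ⟨w', ⟨w₁', hw₁', w₂', hw₂', ℓ, hres'⟩, hw'⟩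

theorem IsDerivation.exists_contains_all (hAA' : ∀ a ∈ A, ∃ a' ∈ A', Contains a' a)
    {L : List (Bool × DyadicBox n)} (hL : IsDerivation A L) :
    ∃ L', IsDerivation A' L' ∧ steps L' ≤ steps L ∧
      ∀ b ∈ L.map (·.2), ∃ b' ∈ L'.map (·.2), Contains b' b := by
  induction L using List.reverseRecOn with
  | nil => exact ⟨[], isDerivation_nil, le_rfl, by simp⟩
  | append_singleton L e ih =>
    obtain ⟨hL, he⟩ := isDerivation_concat_iff.mp hL
    obtain ⟨L', hL', hsteps, hLL'⟩ := ih hL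
    simp only [List.map_append, List.map_cons, List.map_nil, List.mem_append,
      List.mem_singleton, steps_concat]
    rcases he.lift hAA' hLL' with ⟨b', hb', hc⟩ | ⟨b', hstep, hc⟩
    · refine ⟨L', hL', by omega, ?_⟩
      rintro b (hb | rfl)
      exacts [hLL' b hb, ⟨b', hb', hc⟩]
    · refine ⟨L' ++ [(e.1, b')], isDerivation_concat_iff.mpr ⟨hL', hstep⟩, ?_, ?_⟩
      · rw [steps_concat]
        dsimp only
        omega
      · simp only [List.map_append, List.map_cons, List.map_nil, List.mem_append,
          List.mem_singleton]
        rintro b (hb | rfl)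
        · obtain ⟨b'', hb'', hc'⟩ := hLL' b hb
          exact ⟨b'', Or.inl hb'', hc'⟩
        · exact ⟨b', Or.inr rfl, hc⟩

end DyadicBox

/-- Monotonicity of geometric resolution derivations: if every box of `A` is
contained in some box of `A'`, and `z` is derivable from `A` with `r`
resolution steps, then some box containing `z` is derivable from `A'` with at
most `r` resolution steps. -/
theorem derivable_mono (n : ℕ) (A A' : Set (DyadicBox n))
    (hAA' : ∀ a ∈ A, ∃ a' ∈ A', DyadicBox.Contains a' a)
    (z : DyadicBox n) (r : ℕ)
    (hz : ∃ L : List (Bool × DyadicBox n),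
      DyadicBox.IsDerivation A L ∧ DyadicBox.steps L = r ∧ z ∈ L.map (·.2)) :
    ∃ z' : DyadicBox n, DyadicBox.Contains z' z ∧
      ∃ L' : List (Bool × DyadicBox n),
        DyadicBox.IsDerivation A' L' ∧ DyadicBox.steps L' ≤ r ∧ z' ∈ L'.map (·.2) := by
  obtain ⟨L, hL, rfl, hz⟩ := hz
  obtain ⟨L', hL', hsteps, hLL'⟩ := hL.exists_contains_all hAA'
  obtain ⟨z', hz', hc⟩ := hLL' z hz
  exact ⟨z', hc, L', hL', hsteps, hz'⟩
end

section
/- For every integer n ≥ 2: two distinct strings of B^{(n)} form a resolvable pair (i.e. are of the form z0 and z1 for a common string z) if and only if they are 1^{n−2}0 and 1^{n−1}, in which case their resolvent is 1^{n−2}. Consequently, every one-dimensional geometric resolution derivation of the empty string λ from B^{(n)} contains all the strings 1^{n−2}, 1^{n−3}, …, 1, λ and has at least n − 1 resolution steps. -/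
/-!
A string of `B⁽ⁿ⁾` ending in `1` can only be `1^{n−1}`, so the only resolvable pair is
`1^{n−2}0, 1^{n−1}`. In a derivation of `λ`, each string `1^k` with `k ≤ n − 2` lies outside
`B⁽ⁿ⁾`, hence is a resolvent, hence `1^{k+1}` occurs earlier; starting from `λ = 1^0` this
forces the `n − 1` distinct resolvents `λ, 1, …, 1^{n−2}`.
-/

/-- The set `B⁽ⁿ⁾` of binary strings `{1^{i−1}0 : 1 ≤ i ≤ n−1} ∪ {1^{n−1}}`
(with `true` playing the role of the bit `1`). -/
def BSet (n : ℕ) : Set (List Bool) :=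
  {s | (∃ i : ℕ, 1 ≤ i ∧ i ≤ n - 1 ∧ s = List.replicate (i - 1) true ++ [false]) ∨
       s = List.replicate (n - 1) true}

/-- One-dimensional geometric resolution: `r` is the resolvent of `s = r0` and
`t = r1`. -/
def IsResolvent1 (s t r : List Bool) : Prop := s = r ++ [false] ∧ t = r ++ [true]

/-- A (tagged) one-dimensional geometric resolution derivation from a set `A`
of strings: an entry tagged `true` is the resolvent of two earlier entries; an
entry tagged `false` belongs to `A`. -/
def IsDerivation1 (A : Set (List Bool)) (L : List (Bool × List Bool)) : Prop :=
  ∀ k : Fin L.length,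
    if (L.get k).1 then
      ∃ i j : Fin L.length, (i : ℕ) < (k : ℕ) ∧ (j : ℕ) < (k : ℕ) ∧
        IsResolvent1 ((L.get i).2) ((L.get j).2) ((L.get k).2)
    else (L.get k).2 ∈ A

lemma List.replicate_sub_one_eq_append {α : Type*} (a : α) {n : ℕ} (hn : 2 ≤ n) :
    List.replicate (n - 1) a = List.replicate (n - 2) a ++ [a] := by
  rw [show n - 1 = n - 2 + 1 by omega, List.replicate_succ']

lemma List.le_length_of_replicate_mem {α : Type*} [DecidableEq α] {l : List (List α)} {a : α}
    {m : ℕ} (h : ∀ j < m, List.replicate j a ∈ l) : m ≤ l.length :=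
  calc m = ((Finset.range m).image (List.replicate · a)).card := by
        rw [Finset.card_image_of_injective _ (List.replicate_left_injective a), Finset.card_range]
    _ ≤ l.toFinset.card := Finset.card_le_card fun x hx => by
        obtain ⟨j, hj, rfl⟩ := Finset.mem_image.1 hx
        exact List.mem_toFinset.2 (h j (Finset.mem_range.1 hj))
    _ ≤ l.length := List.toFinset_card_le l

lemma eq_replicate_of_append_true_mem_BSet {n : ℕ} {z : List Bool}
    (h : z ++ [true] ∈ BSet n) : z = List.replicate (n - 2) true := by
  rcases h with ⟨i, -, -, h⟩ | h
  · simpa using congrArg List.getLast? h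
  · have hlen : z.length + 1 = n - 1 := by simpa using congrArg List.length h
    rw [List.replicate_sub_one_eq_append true (by omega)] at h
    exact List.append_inj_left' h rfl

lemma replicate_true_not_mem_BSet {n k : ℕ} (hk : k ≠ n - 1) :
    List.replicate k true ∉ BSet n := by
  rintro (⟨i, -, -, h⟩ | h)
  · have hfalse : false ∈ List.replicate k true :=
      h ▸ List.mem_append_right _ (List.mem_singleton_self _)
    exact Bool.false_ne_true (List.eq_of_mem_replicate hfalse)
  · exact hk (List.replicate_inj.1 h).1

def resolvents (L : List (Bool × List Bool)) : List (List Bool) := (L.filter (·.1)).map (·.2)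

namespace IsDerivation1

variable {A : Set (List Bool)} {L : List (Bool × List Bool)}

lemma snd_mem_of_fst_eq_false {p : Bool × List Bool} (hL : IsDerivation1 A L) (hp : p ∈ L)
    (h : p.1 = false) : p.2 ∈ A := by
  obtain ⟨k, rfl⟩ := List.mem_iff_get.1 hp
  have hk := hL k
  simpa only [h, Bool.false_eq_true, ↓reduceIte] using hk

lemma exists_isResolvent1_of_fst_eq_true {p : Bool × List Bool} (hL : IsDerivation1 A L)
    (hp : p ∈ L) (h : p.1 = true) : ∃ q ∈ L, ∃ r ∈ L, IsResolvent1 q.2 r.2 p.2 := by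
  obtain ⟨k, rfl⟩ := List.mem_iff_get.1 hp
  have hk := hL k
  simp only [h, ↓reduceIte] at hk
  obtain ⟨i, j, -, -, hij⟩ := hk
  exact ⟨_, List.get_mem L i, _, List.get_mem L j, hij⟩

lemma mem_resolvents_of_not_mem {z : List Bool} (hL : IsDerivation1 A L)
    (hz : z ∈ L.map (·.2)) (hA : z ∉ A) : z ∈ resolvents L := by
  obtain ⟨p, hp, rfl⟩ := List.mem_map.1 hz
  cases h : p.1
  · exact absurd (hL.snd_mem_of_fst_eq_false hp h) hA
  · exact List.mem_map_of_mem (List.mem_filter.2 ⟨hp, h⟩)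

lemma append_true_mem_of_mem_resolvents {z : List Bool} (hL : IsDerivation1 A L)
    (hz : z ∈ resolvents L) : z ++ [true] ∈ L.map (·.2) := by
  obtain ⟨p, hp, rfl⟩ := List.mem_map.1 hz
  obtain ⟨hpL, hp1⟩ := List.mem_filter.1 hp
  obtain ⟨-, -, r, hr, -, hres⟩ := hL.exists_isResolvent1_of_fst_eq_true hpL hp1
  exact List.mem_map.2 ⟨r, hr, hres⟩

lemma replicate_true_mem_resolvents {m : ℕ} (hL : IsDerivation1 A L)
    (h₀ : ([] : List Bool) ∈ L.map (·.2)) (hA : ∀ j ≤ m, List.replicate j true ∉ A) :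
    ∀ j ≤ m, List.replicate j true ∈ resolvents L
  | 0, _ => hL.mem_resolvents_of_not_mem h₀ (hA 0 (Nat.zero_le m))
  | j + 1, hj => by
    have hprev := hL.append_true_mem_of_mem_resolvents
      (hL.replicate_true_mem_resolvents h₀ hA j (by omega))
    rw [← List.replicate_succ'] at hprev
    exact hL.mem_resolvents_of_not_mem hprev (hA (j + 1) hj)

end IsDerivation1

/-- For `n ≥ 2`: two distinct strings of `B⁽ⁿ⁾` are resolvable iff they are
`1^{n−2}0` and `1^{n−1}`, in which case the resolvent is `1^{n−2}`; hence every
one-dimensional geometric resolution derivation of the empty string from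
`B⁽ⁿ⁾` contains all of `1^{n−2}, …, 1, λ` and has at least `n − 1` resolution
steps. -/
theorem BSet_resolution (n : ℕ) (hn : 2 ≤ n) :
    (∀ s ∈ BSet n, ∀ t ∈ BSet n, s ≠ t →
      ((∃ z : List Bool, IsResolvent1 s t z) ↔
        (s = List.replicate (n - 2) true ++ [false] ∧
         t = List.replicate (n - 1) true))) ∧
    (∀ s ∈ BSet n, ∀ t ∈ BSet n, ∀ z : List Bool,
      IsResolvent1 s t z → z = List.replicate (n - 2) true) ∧
    (∀ L : List (Bool × List Bool), IsDerivation1 (BSet n) L →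
      ([] : List Bool) ∈ L.map (·.2) →
      (∀ k ≤ n - 2, List.replicate k true ∈ L.map (·.2)) ∧
      n - 1 ≤ (L.filter (·.1)).length) := by
  refine ⟨fun _ _ _ ht _ => ⟨?_, ?_⟩,
    fun _ _ _ ht _ hz => eq_replicate_of_append_true_mem_BSet (hz.2 ▸ ht), ?_⟩
  · rintro ⟨z, rfl, rfl⟩
    obtain rfl := eq_replicate_of_append_true_mem_BSet ht
    exact ⟨rfl, (List.replicate_sub_one_eq_append true hn).symm⟩
  · rintro ⟨rfl, rfl⟩
    exact ⟨_, rfl, List.replicate_sub_one_eq_append true hn⟩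
  · intro L hL h₀
    have hres := hL.replicate_true_mem_resolvents (m := n - 2) h₀ fun j hj =>
      replicate_true_not_mem_BSet (k := j) (by omega)
    refine ⟨fun k hk => ?_, ?_⟩
    · exact List.map_subset _ (List.filter_subset_self _) (hres k hk)
    · simpa [resolvents] using
        List.le_length_of_replicate_mem (m := n - 1) fun j hj => hres j (by omega)
end

section
/- Balanced partition existence: let d ≥ 0 and let C be a finite multiset of dyadic intervals at depth d with |C| = N ≥ 1. Then there exists a prefix-free set P of binary strings of length ≤ d such that: every binary string of length d has exactly one element of P as a prefix; for every x ∈ P, the number of elements of C having x as a strict prefix is at most ⌊√N⌋; and |P| ≤ 2(d+1)·⌊√N⌋ + 1. -/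
namespace BalancedPartition

/-- equal-length prefixes of the same list are equal -/
lemma prefix_eq_prefix {a b c : List Bool} (h1 : a <+: c) (h2 : b <+: c)
    (h3 : a.length = b.length) : a = b := by
  rw [List.prefix_iff_eq_take.mp h1, List.prefix_iff_eq_take.mp h2, h3]

lemma prefix_comparable {y z w : List Bool} (h1 : y <+: w) (h2 : z <+: w)
    (hl : y.length ≤ z.length) : y <+: z := by
  have hy : y = z.take y.length := by
    calc y = w.take y.length := List.prefix_iff_eq_take.mp h1
      _ = (w.take z.length).take y.length := by
          rw [List.take_take, Nat.min_eq_left hl]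
      _ = z.take y.length := by rw [← List.prefix_iff_eq_take.mp h2]
  exact hy ▸ List.take_prefix _ z

/-- the recursive construction of the partition -/
def build (h : List Bool → Bool) : ℕ → List Bool → Finset (List Bool)
  | 0, x => {x}
  | (n+1), x =>
    if h x then build h n (x ++ [false]) ∪ build h n (x ++ [true]) else {x}

/-- counts heavy nodes visited -/
def cH (h : List Bool → Bool) : ℕ → List Bool → ℕ
  | 0, _ => 0
  | (n+1), x => if h x then 1 + cH h n (x ++ [false]) + cH h n (x ++ [true]) else 0

lemma mem_build {h : List Bool → Bool} :
    ∀ {n : ℕ} {x y : List Bool}, y ∈ build h n x → x <+: y ∧ y.length ≤ x.length + n := by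
  intro n
  induction n with
  | zero => intro x y hy; simp [build] at hy; simp [hy]
  | succ n ih =>
    intro x y hy
    rw [build] at hy
    by_cases hx : h x
    · rw [if_pos hx, Finset.mem_union] at hy
      have key : ∀ b : Bool, y ∈ build h n (x ++ [b]) →
          x <+: y ∧ y.length ≤ x.length + (n+1) := by
        intro b hb
        obtain ⟨h1, h2⟩ := ih hb
        refine ⟨(List.prefix_append x [b]).trans h1, ?_⟩
        simpa [List.length_append, Nat.add_comm, Nat.add_assoc, Nat.add_left_comm] using h2
      rcases hy with hy | hy
      · exact key false hy
      · exact key true hy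
    · rw [if_neg hx, Finset.mem_singleton] at hy
      simp [hy]

lemma build_not_heavy {h : List Bool → Bool} {d : ℕ}
    (hH : ∀ z : List Bool, h z = true → z.length < d) :
    ∀ {n : ℕ} {x y : List Bool}, x.length + n = d → y ∈ build h n x → h y = false := by
  intro n
  induction n with
  | zero =>
    intro x y hd hy
    simp [build] at hy
    subst hy
    by_contra hb
    have := hH y (by simpa using hb)
    omega
  | succ n ih =>
    intro x y hd hy
    rw [build] at hy
    by_cases hx : h x
    · rw [if_pos hx, Finset.mem_union] at hy
      rcases hy with hy | hy
      · exact ih (by simp; omega) hy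
      · exact ih (by simp; omega) hy
    · rw [if_neg hx, Finset.mem_singleton] at hy
      subst hy
      simpa using hx

lemma build_prefix_free {h : List Bool → Bool} :
    ∀ {n : ℕ} {x y z : List Bool}, y ∈ build h n x → z ∈ build h n x → y <+: z → y = z := by
  intro n
  induction n with
  | zero => intro x y z hy hz _; simp [build] at hy hz; rw [hy, hz]
  | succ n ih =>
    intro x y z hy hz hyz
    rw [build] at hy hz
    by_cases hx : h x
    · rw [if_pos hx, Finset.mem_union] at hy hz
      have cross : ∀ b b' : Bool, b ≠ b' → y ∈ build h n (x ++ [b]) →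
          z ∈ build h n (x ++ [b']) → y = z := by
        intro b b' hbb hyb hzb
        have h1 : (x ++ [b]) <+: z := (mem_build hyb).1.trans hyz
        have h2 : (x ++ [b']) <+: z := (mem_build hzb).1
        have := prefix_eq_prefix h1 h2 (by simp)
        simp at this
        exact absurd this hbb
      rcases hy with hy | hy <;> rcases hz with hz | hz
      · exact ih hy hz hyz
      · exact cross false true (by simp) hy hz
      · exact cross true false (by simp) hy hz
      · exact ih hy hz hyz
    · rw [if_neg hx, Finset.mem_singleton] at hy hz; rw [hy, hz]

lemma build_partition {h : List Bool → Bool} {d : ℕ} :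
    ∀ {n : ℕ} {x : List Bool}, x.length + n = d →
      ∀ w : List Bool, w.length = d → x <+: w →
        ∃ y, y ∈ build h n x ∧ y <+: w := by
  intro n
  induction n with
  | zero =>
    intro x hd w hw hxw
    exact ⟨x, by simp [build], hxw⟩
  | succ n ih =>
    intro x hd w hw hxw
    rw [build]
    by_cases hx : h x
    · rw [if_pos hx]
      -- w extends x and is strictly longer
      obtain ⟨t, ht⟩ := hxw
      have hlt : x.length < w.length := by omega
      have htne : t ≠ [] := by
        rintro rfl; simp at ht; subst ht; omega
      obtain ⟨b, t', rfl⟩ := List.exists_cons_of_ne_nil htne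
      have hxbw : (x ++ [b]) <+: w := by
        refine ⟨t', ?_⟩; rw [← ht]; simp
      obtain ⟨y, hy1, hy2⟩ := ih (x := x ++ [b]) (by simp; omega) w hw hxbw
      cases b
      · exact ⟨y, Finset.mem_union_left _ hy1, hy2⟩
      · exact ⟨y, Finset.mem_union_right _ hy1, hy2⟩
    · rw [if_neg hx]
      exact ⟨x, Finset.mem_singleton_self x, hxw⟩

lemma card_build_le {h : List Bool → Bool} :
    ∀ {n : ℕ} {x : List Bool}, (build h n x).card ≤ cH h n x + 1 := by
  intro n
  induction n with
  | zero => intro x; simp [build, cH]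
  | succ n ih =>
    intro x
    rw [build, cH]
    by_cases hx : h x
    · rw [if_pos hx, if_pos hx]
      calc (build h n (x ++ [false]) ∪ build h n (x ++ [true])).card
          ≤ (build h n (x ++ [false])).card + (build h n (x ++ [true])).card :=
            Finset.card_union_le _ _
        _ ≤ (cH h n (x ++ [false]) + 1) + (cH h n (x ++ [true]) + 1) :=
            Nat.add_le_add ih ih
        _ = 1 + cH h n (x ++ [false]) + cH h n (x ++ [true]) + 1 := by ring
    · rw [if_neg hx, if_neg hx]; simp

/-- all binary strings of length ℓ -/
def level (ℓ : ℕ) : Finset (List Bool) :=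
  Finset.image List.ofFn (Finset.univ : Finset (Fin ℓ → Bool))

lemma mem_level {ℓ : ℕ} {z : List Bool} : z ∈ level ℓ ↔ z.length = ℓ := by
  constructor
  · rintro hz
    simp only [level, Finset.mem_image] at hz
    obtain ⟨f, _, rfl⟩ := hz
    simp
  · rintro rfl
    simp only [level, Finset.mem_image]
    exact ⟨z.get, Finset.mem_univ _, List.ofFn_get z⟩

/-- the Finset of heavy nodes of length ℓ below x -/
def S (h : List Bool → Bool) (x : List Bool) (ℓ : ℕ) : Finset (List Bool) :=
  (level ℓ).filter (fun z => x <+: z ∧ h z = true)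

lemma cH_le {h : List Bool → Bool} :
    ∀ {n : ℕ} {x : List Bool},
      cH h n x ≤ ∑ i ∈ Finset.range n, (S h x (x.length + i)).card := by
  intro n
  induction n with
  | zero => intro x; simp [cH]
  | succ n ih =>
    intro x
    rw [cH]
    by_cases hx : h x
    · rw [if_pos hx]
      rw [Finset.sum_range_succ']
      have hself : 1 ≤ (S h x (x.length + 0)).card := by
        refine Finset.card_pos.mpr ⟨x, ?_⟩
        simp [S, Finset.mem_filter, mem_level, hx]
      have hsplit : ∀ i : ℕ,
          (S h (x ++ [false]) ((x ++ [false]).length + i)).card +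
          (S h (x ++ [true]) ((x ++ [true]).length + i)).card ≤
          (S h x (x.length + (i + 1))).card := by
        intro i
        have hlen : ∀ b : Bool, (x ++ [b]).length + i = x.length + (i + 1) := by
          intro b; simp; omega
        rw [hlen false, hlen true]
        rw [← Finset.card_union_of_disjoint]
        · apply Finset.card_le_card
          intro z hz
          simp only [S, Finset.mem_union, Finset.mem_filter] at hz ⊢
          rcases hz with ⟨h1, h2, h3⟩ | ⟨h1, h2, h3⟩ <;>
            exact ⟨h1, (List.prefix_append x _).trans h2, h3⟩
        · rw [Finset.disjoint_left]
          intro z hz1 hz2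
          simp only [S, Finset.mem_filter] at hz1 hz2
          have := prefix_eq_prefix hz1.2.1 hz2.2.1 (by simp)
          simp at this
      have hAB : (∑ i ∈ Finset.range n, (S h (x ++ [false]) ((x ++ [false]).length + i)).card)
          + (∑ i ∈ Finset.range n, (S h (x ++ [true]) ((x ++ [true]).length + i)).card)
          ≤ ∑ i ∈ Finset.range n, (S h x (x.length + (i + 1))).card := by
        rw [← Finset.sum_add_distrib]
        exact Finset.sum_le_sum fun i _ => hsplit i
      have i1 := ih (x := x ++ [false])
      have i2 := ih (x := x ++ [true])
      omega
    · rw [if_neg hx]; exact Nat.zero_le _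

/-- sum of cards of disjoint filters is at most the card -/
lemma sum_card_filter_le {α β : Type*} [DecidableEq β] (C : Multiset α) (T : Finset β)
    (p : β → α → Prop) [∀ x, DecidablePred (p x)]
    (hdisj : ∀ c x y, x ∈ T → y ∈ T → p x c → p y c → x = y) :
    ∑ x ∈ T, Multiset.card (C.filter (p x)) ≤ Multiset.card C := by
  induction C using Multiset.induction with
  | empty => simp
  | cons a C ih =>
    have hstep : ∀ x ∈ T, Multiset.card ((a ::ₘ C).filter (p x)) =
        Multiset.card (C.filter (p x)) + (if p x a then 1 else 0) := by
      intro x _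
      by_cases hp : p x a
      · rw [Multiset.filter_cons_of_pos _ hp, if_pos hp]; simp
      · rw [Multiset.filter_cons_of_neg _ hp, if_neg hp, Nat.add_zero]
    rw [Finset.sum_congr rfl hstep, Finset.sum_add_distrib]
    have h2 : ∑ x ∈ T, (if p x a then 1 else 0) ≤ 1 := by
      rw [Finset.sum_boole]
      norm_cast
      rw [Finset.card_le_one]
      intro x hx y hy
      simp only [Finset.mem_filter] at hx hy
      exact hdisj a x y hx.1 hy.1 hx.2 hy.2
    simp only [Multiset.card_cons]
    omega

end BalancedPartition

open BalancedPartition in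
/-- Existence of a balanced dimension partition: for any finite multiset `C` of
dyadic intervals (binary strings of length `≤ d`) with `|C| = N ≥ 1`, there is
a prefix-free set `P` of strings of length `≤ d` such that every length-`d`
string has exactly one element of `P` as a prefix, every `x ∈ P` has at most
`⌊√N⌋` elements of `C` as strict extensions, and `|P| ≤ 2(d+1)⌊√N⌋ + 1`. -/
theorem balanced_partition_exists (d : ℕ) (C : Multiset (List Bool))
    (hC : ∀ c ∈ C, c.length ≤ d) (hN : 1 ≤ Multiset.card C) :
    ∃ P : Finset (List Bool),
      (∀ x ∈ P, x.length ≤ d) ∧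
      (∀ x ∈ P, ∀ y ∈ P, x ≠ y → ¬ x <+: y) ∧
      (∀ w : List Bool, w.length = d → ∃! x : List Bool, x ∈ P ∧ x <+: w) ∧
      (∀ x ∈ P,
        Multiset.card (C.filter (fun c => x <+: c ∧ x ≠ c)) ≤
          Nat.sqrt (Multiset.card C)) ∧
      P.card ≤ 2 * (d + 1) * Nat.sqrt (Multiset.card C) + 1 := by
  set N := Multiset.card C with hNdef
  set s := Nat.sqrt N with hsdef
  set wt : List Bool → ℕ :=
    fun x => Multiset.card (C.filter (fun c => x <+: c ∧ x ≠ c)) with hwt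
  set h : List Bool → Bool := fun x => decide (s < wt x) with hh
  have hheavy : ∀ z : List Bool, h z = true → s < wt z := by
    intro z hz; simpa [hh] using hz
  have hH : ∀ z : List Bool, h z = true → z.length < d := by
    intro z hz
    have h1 : 0 < wt z := lt_of_le_of_lt (Nat.zero_le s) (hheavy z hz)
    rw [hwt, Multiset.card_pos] at h1

    obtain ⟨c, hc⟩ := Multiset.exists_mem_of_ne_zero h1
    rw [Multiset.mem_filter] at hc
    obtain ⟨hcC, hpre, hne⟩ := hc
    have h2 : z.length ≤ c.length := hpre.length_le
    have h3 : z.length ≠ c.length := fun he => hne (hpre.eq_of_length he)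
    have := hC c hcC
    omega
  refine ⟨build h d [], ?_, ?_, ?_, ?_, ?_⟩
  · intro x hx
    have := (mem_build hx).2
    simpa using this
  · intro x hx y hy hne hpre
    exact hne (build_prefix_free hx hy hpre)
  · intro w hw
    obtain ⟨y, hy1, hy2⟩ := build_partition (h := h) (d := d) (Nat.zero_add d) w hw (List.nil_prefix)
    refine ⟨y, ⟨hy1, hy2⟩, ?_⟩
    intro z ⟨hz1, hz2⟩
    rcases Nat.le_total z.length y.length with hl | hl
    · exact build_prefix_free hz1 hy1 (prefix_comparable hz2 hy2 hl)
    · exact (build_prefix_free hy1 hz1 (prefix_comparable hy2 hz2 hl)).symm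
  · intro x hx
    have := build_not_heavy (d := d) hH (by simp) hx
    rw [hh] at this
    simp only [decide_eq_false_iff_not, not_lt] at this
    exact this
  · -- cardinality bound
    have hlevel : ∀ ℓ : ℕ, (S h ([] : List Bool) ℓ).card ≤ s := by
      intro ℓ
      set T := S h ([] : List Bool) ℓ with hT
      have hsum1 : T.card • (s + 1) ≤ ∑ x ∈ T, wt x := by
        apply Finset.card_nsmul_le_sum
        intro x hx
        rw [hT, S, Finset.mem_filter] at hx
        exact hheavy x hx.2.2
      have hsum2 : ∑ x ∈ T, wt x ≤ N := by
        rw [hwt, hNdef]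
        apply sum_card_filter_le
        intro c x y hx hy hxc hyc
        rw [hT, S, Finset.mem_filter, mem_level] at hx hy
        exact prefix_eq_prefix hxc.1 hyc.1 (hx.1.trans hy.1.symm)
      have hlt : N < (s + 1) * (s + 1) := by
        rw [hsdef]; exact Nat.lt_succ_sqrt N
      rw [smul_eq_mul] at hsum1
      nlinarith [hsum1, hsum2, hlt]
    have h1 : (build h d ([] : List Bool)).card ≤ cH h d [] + 1 := card_build_le
    have h2 : cH h d ([] : List Bool) ≤
        ∑ i ∈ Finset.range d, (S h ([] : List Bool) (([] : List Bool).length + i)).card := cH_le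
    have h3 : ∑ i ∈ Finset.range d, (S h ([] : List Bool) (([] : List Bool).length + i)).card
        ≤ ∑ _i ∈ Finset.range d, s := Finset.sum_le_sum fun i _ => hlevel _
    rw [Finset.sum_const, Finset.card_range, smul_eq_mul] at h3
    have : d * s ≤ 2 * (d + 1) * s := by nlinarith
    omega
end

section
/- Tree ordered geometric resolution lower bound: for every integer n > 1 there exists a constant α > 0, depending only on n, such that for every bit depth d ≥ 1 the following holds. In dimension n with depth d, let C be the union of the following sets of dyadic boxes: C_1 = all boxes whose first component is a length-d string ending in 0 and whose other components are λ; C_{n+1} = all boxes whose n-th component is a length-d string ending in 1 and whose other components are λ; and, for 2 ≤ i ≤ n, C_i = all boxes whose (i−1)-st and i-th components are length-d strings whose last bits are complementary (one ends in 0, the other in 1) and whose other components are λ. Then the union of the boxes of C covers the universal box ⟨λ,…,λ⟩, and every tree ordered geometric resolution proof of ⟨λ,…,λ⟩ from C — with respect to the coordinate order (1,…,n), and likewise with respect to its reverse — has at least α·N^{n/2} internal nodes, where N = |C|. -/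
/-- Ordered geometric resolution with respect to the coordinate order given by
`σ` (so `σ 0` is the first coordinate, …, `σ (n-1)` the last): `w` is the
ordered resolvent of `w₁` and `w₂` on the `ℓ`-th coordinate in this order. All
components after position `ℓ` are `λ`; the components at position `ℓ` are `x0`
and `x1` and become `x`; each earlier component of `w` is the longer of the two
(prefix-comparable) components. -/
def IsOrderedResolvent (n : ℕ) (σ : Equiv.Perm (Fin n))
    (w₁ w₂ : DyadicBox n) (ℓ : Fin n) (w : DyadicBox n) : Prop :=
  (∃ x : List Bool, w₁ (σ ℓ) = x ++ [false] ∧ w₂ (σ ℓ) = x ++ [true] ∧ w (σ ℓ) = x) ∧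
  (∀ m : Fin n, ℓ < m → w₁ (σ m) = [] ∧ w₂ (σ m) = [] ∧ w (σ m) = []) ∧
  (∀ m : Fin n, m < ℓ →
    (w₁ (σ m) <+: w₂ (σ m) ∧ w (σ m) = w₂ (σ m)) ∨
    (w₂ (σ m) <+: w₁ (σ m) ∧ w (σ m) = w₁ (σ m)))

/-- A (tagged) ordered geometric resolution derivation from `A` with respect to
the coordinate order `σ`. -/
def IsOrderedDerivation (n : ℕ) (σ : Equiv.Perm (Fin n)) (A : Set (DyadicBox n))
    (L : List (Bool × DyadicBox n)) : Prop :=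
  ∀ k : Fin L.length,
    if (L.get k).1 then
      ∃ i j : Fin L.length, (i : ℕ) < (k : ℕ) ∧ (j : ℕ) < (k : ℕ) ∧
        ∃ ℓ : Fin n, IsOrderedResolvent n σ ((L.get i).2) ((L.get j).2) ℓ ((L.get k).2)
    else (L.get k).2 ∈ A

/-- A tree ordered geometric resolution proof (w.r.t. the coordinate order `σ`)
of a box from the set `A`, together with its number of internal nodes: leaves
are labeled by boxes of `A`, and each internal node is labeled by the ordered
geometric resolvent of the labels of its two children. -/
inductive OrderedTreeProof (n : ℕ) (σ : Equiv.Perm (Fin n)) (A : Set (DyadicBox n)) :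
    DyadicBox n → ℕ → Prop where
  | leaf {b : DyadicBox n} : b ∈ A → OrderedTreeProof n σ A b 0
  | node {b₁ b₂ b : DyadicBox n} {s₁ s₂ : ℕ} {ℓ : Fin n} :
      OrderedTreeProof n σ A b₁ s₁ → OrderedTreeProof n σ A b₂ s₂ →
      IsOrderedResolvent n σ b₁ b₂ ℓ b → OrderedTreeProof n σ A b (s₁ + s₂ + 1)

/-!
Reversing the coordinates and flipping every bit maps `C` onto itself and turns proofs for the
reverse order into proofs for the order `(1,…,n)`, so only that order needs work. There every box
of a proof reads `⟨y₁,…,y_ℓ,λ,…,λ⟩` with `y₁,…,y_{ℓ-1}` empty or full, and following the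
`0`-premises down the proof shows that if `y_ℓ` ends in `0` then `y_{ℓ-1}` is full and ends in `1`.
So a resolution on a coordinate beyond the top coordinate `ℓ` of its resolvent is on coordinate
`ℓ + 1`, with premises whose components there are `0` and `1`: not axioms when `d ≥ 2`.

By induction on the proof, a non-axiom box whose top component has `k` bits, with `r` coordinates
after it, has at least `2 ^ ((d - 1) r + (d - 1 - k))` leaves: a resolution on the top coordinate
has premises with one more bit there, and when these are full the two premises cannot both be
axioms; a resolution on the next coordinate doubles the count of its one-bit premises. Hence the
universal box needs `2 ^ ((d - 1) n)` leaves, while `|C| ≤ n (2 ^ d + 1) ^ 2`.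
-/

theorem exists_ne_succ_of_ne {α : Type*} (f : ℕ → α) {k : ℕ} (h : f 0 ≠ f k) :
    ∃ j < k, f j ≠ f (j + 1) := by
  induction k with
  | zero => exact absurd rfl h
  | succ k ih =>
    by_cases hk : f 0 = f k
    · exact ⟨k, k.lt_succ_self, hk ▸ h⟩
    · obtain ⟨j, hj, hne⟩ := ih hk
      exact ⟨j, by omega, hne⟩

theorem List.exists_ofFn_eq {α : Type*} {l : List α} {d : ℕ} (h : l.length = d) :
    ∃ f : Fin d → α, List.ofFn f = l := by
  subst h
  exact ⟨l.get, List.ofFn_get l⟩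

theorem Nat.two_pow_le_add_add_one_add_one {e e' a b : ℕ} (he : e ≤ e' + 1)
    (ha : 2 ^ e' ≤ a + 1) (hb : 2 ^ e' ≤ b + 1) : 2 ^ e ≤ a + b + 1 + 1 := by
  have := Nat.pow_le_pow_right two_pos he
  rw [pow_succ] at this
  omega

section OrderedResolution

variable {n : ℕ} {σ : Equiv.Perm (Fin n)}

theorem DyadicBox.contains_ite (p : DyadicBox n) (P : ℕ → Prop) [DecidablePred P] :
    DyadicBox.Contains (fun i => if P i then p i else []) p := fun i => by
  dsimp only
  split_ifs
  exacts [List.prefix_refl _, List.nil_prefix]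

theorem IsOrderedResolvent.prefix_of_lt {w₁ w₂ w : DyadicBox n} {ℓ m : Fin n}
    (h : IsOrderedResolvent n σ w₁ w₂ ℓ w) (hm : m < ℓ) :
    w₁ (σ m) <+: w (σ m) ∧ w₂ (σ m) <+: w (σ m) := by
  rcases h.2.2 m hm with ⟨h₁, h⟩ | ⟨h₂, h⟩ <;> rw [h]
  · exact ⟨h₁, List.prefix_refl _⟩
  · exact ⟨List.prefix_refl _, h₂⟩

theorem IsOrderedResolvent.eq_or_eq_of_lt {w₁ w₂ w : DyadicBox n} {ℓ m : Fin n}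
    (h : IsOrderedResolvent n σ w₁ w₂ ℓ w) (hm : m < ℓ) :
    w (σ m) = w₁ (σ m) ∨ w (σ m) = w₂ (σ m) := by
  rcases h.2.2 m hm with ⟨-, h⟩ | ⟨-, h⟩
  exacts [.inr h, .inl h]

variable {A : Set (DyadicBox n)} {d : ℕ}

theorem OrderedTreeProof.length_le {B : DyadicBox n} {s : ℕ} (hB : OrderedTreeProof n σ A B s)
    (hA : ∀ a ∈ A, ∀ i, (a i).length ≤ d) (i : Fin n) : (B i).length ≤ d := by
  induction hB generalizing i with
  | leaf ha => exact hA _ ha i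
  | @node _ _ _ _ _ ℓ _ _ hres ih₁ ih₂ =>
    obtain ⟨m, rfl⟩ := σ.surjective i
    rcases lt_trichotomy m ℓ with hm | rfl | hm
    · rcases hres.eq_or_eq_of_lt hm with h | h <;> rw [h]
      exacts [ih₁ _, ih₂ _]
    · obtain ⟨x, e₁, -, e⟩ := hres.1
      have := ih₁ (σ m)
      rw [e₁, List.length_append] at this
      rw [e]
      omega
    · simp [(hres.2.1 m hm).2.2]

theorem OrderedTreeProof.nil_or_length_eq_of_lt {B : DyadicBox n} {s : ℕ}
    (hB : OrderedTreeProof n σ A B s) (hA : ∀ a ∈ A, ∀ i, a i = [] ∨ (a i).length = d)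
    {m m' : Fin n} (hmm' : m < m') (hm' : B (σ m') ≠ []) :
    B (σ m) = [] ∨ (B (σ m)).length = d := by
  induction hB generalizing m m' with
  | leaf ha => exact hA _ ha _
  | @node _ _ _ _ _ ℓ _ _ hres ih₁ ih₂ =>
    have hm'ℓ : m' ≤ ℓ := le_of_not_gt fun h => hm' (hres.2.1 m' h).2.2
    obtain ⟨x, e₁, e₂, -⟩ := hres.1
    rcases hres.eq_or_eq_of_lt (hmm'.trans_le hm'ℓ) with h | h <;> rw [h]
    · exact ih₁ (hmm'.trans_le hm'ℓ) (by simp [e₁])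
    · exact ih₂ (hmm'.trans_le hm'ℓ) (by simp [e₂])

theorem IsOrderedResolvent.nil_or_length_eq_of_lt {b₁ b₂ B : DyadicBox n} {s₁ s₂ : ℕ}
    {c m : Fin n} (hA : ∀ a ∈ A, ∀ i, a i = [] ∨ (a i).length = d)
    (p₁ : OrderedTreeProof n σ A b₁ s₁) (p₂ : OrderedTreeProof n σ A b₂ s₂)
    (hres : IsOrderedResolvent n σ b₁ b₂ c B) (hm : m < c) :
    B (σ m) = [] ∨ (B (σ m)).length = d := by
  obtain ⟨x, e₁, e₂, -⟩ := hres.1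
  rcases hres.eq_or_eq_of_lt hm with h | h <;> rw [h]
  exacts [p₁.nil_or_length_eq_of_lt hA hm (by simp [e₁]),
    p₂.nil_or_length_eq_of_lt hA hm (by simp [e₂])]

def DyadicBox.mirror (b : DyadicBox n) : DyadicBox n := fun i => (b i.rev).map not

theorem IsOrderedResolvent.mirror {w₁ w₂ w : DyadicBox n} {ℓ : Fin n}
    (h : IsOrderedResolvent n Fin.revPerm w₁ w₂ ℓ w) :
    IsOrderedResolvent n (Equiv.refl _) w₂.mirror w₁.mirror ℓ w.mirror := by
  obtain ⟨⟨x, e₁, e₂, e⟩, habove, hbelow⟩ := h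
  simp only [Fin.revPerm_apply] at e₁ e₂ e habove hbelow
  refine ⟨⟨x.map not, ?_, ?_, ?_⟩, fun m hm => ?_, fun m hm => ?_⟩
  · simp [DyadicBox.mirror, e₂]
  · simp [DyadicBox.mirror, e₁]
  · simp [DyadicBox.mirror, e]
  · simp [DyadicBox.mirror, habove m hm]
  · simp only [DyadicBox.mirror, Equiv.refl_apply]
    rcases hbelow m hm with ⟨hp, he⟩ | ⟨hp, he⟩
    · exact .inr ⟨hp.map not, by rw [he]⟩
    · exact .inl ⟨hp.map not, by rw [he]⟩

theorem OrderedTreeProof.mirror (hA : ∀ a ∈ A, a.mirror ∈ A) {B : DyadicBox n} {s : ℕ}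
    (hB : OrderedTreeProof n Fin.revPerm A B s) :
    OrderedTreeProof n (Equiv.refl _) A B.mirror s := by
  induction hB with
  | leaf ha => exact .leaf (hA _ ha)
  | @node _ _ _ s₁ s₂ _ _ _ hres ih₁ ih₂ => exact add_comm s₂ s₁ ▸ .node ih₂ ih₁ hres.mirror

end OrderedResolution

namespace TreeOrderedResolution

variable {n d : ℕ}

/-- The paper's `C = C₁ ∪ ⋯ ∪ Cₙ₊₁`, with coordinates numbered from `0`. -/
def chainAxioms (n d : ℕ) : Set (DyadicBox n) :=
  {b | (∃ t : List Bool, t.length + 1 = d ∧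
          ∀ i : Fin n, ((i : ℕ) = 0 → b i = t ++ [false]) ∧ ((i : ℕ) ≠ 0 → b i = [])) ∨
       (∃ t : List Bool, t.length + 1 = d ∧
          ∀ i : Fin n, ((i : ℕ) = n - 1 → b i = t ++ [true]) ∧ ((i : ℕ) ≠ n - 1 → b i = [])) ∨
       (∃ j : ℕ, j + 2 ≤ n ∧ ∃ t u : List Bool, ∃ v : Bool,
          t.length + 1 = d ∧ u.length + 1 = d ∧
          ∀ i : Fin n, ((i : ℕ) = j → b i = t ++ [v]) ∧
            ((i : ℕ) = j + 1 → b i = u ++ [!v]) ∧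
            ((i : ℕ) ≠ j → (i : ℕ) ≠ j + 1 → b i = []))}

theorem eq_nil_or_length_eq_of_mem {b : DyadicBox n} (hb : b ∈ chainAxioms n d) (i : Fin n) :
    b i = [] ∨ (b i).length = d := by
  rcases hb with ⟨t, ht, hb⟩ | ⟨t, ht, hb⟩ | ⟨j, -, t, u, v, ht, hu, hb⟩
  · by_cases h : (i : ℕ) = 0
    · simp [(hb i).1 h, ht]
    · exact .inl ((hb i).2 h)
  · by_cases h : (i : ℕ) = n - 1
    · simp [(hb i).1 h, ht]
    · exact .inl ((hb i).2 h)
  · by_cases h : (i : ℕ) = j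
    · simp [(hb i).1 h, ht]
    by_cases h' : (i : ℕ) = j + 1
    · simp [(hb i).2.1 h', hu]
    · exact .inl ((hb i).2.2 h h')

theorem length_le_of_mem {b : DyadicBox n} (hb : b ∈ chainAxioms n d) (i : Fin n) :
    (b i).length ≤ d := by
  rcases eq_nil_or_length_eq_of_mem hb i with h | h <;> simp [h]

theorem not_mem_of_length_pos_of_lt {b : DyadicBox n} {i : Fin n} (h₀ : 0 < (b i).length)
    (hd : (b i).length < d) : b ∉ chainAxioms n d := fun hb => by
  rcases eq_nil_or_length_eq_of_mem hb i with h | h <;> simp_all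

theorem nil_not_mem (hn : 0 < n) : (fun _ => []) ∉ chainAxioms n d := by
  rintro (⟨t, -, h⟩ | ⟨t, -, h⟩ | ⟨j, hj, t, u, v, -, -, h⟩)
  · simpa using (h ⟨0, hn⟩).1 rfl
  · simpa using (h ⟨n - 1, by omega⟩).1 rfl
  · simpa using (h ⟨j, by omega⟩).1 rfl

theorem mirror_mem {b : DyadicBox n} (hb : b ∈ chainAxioms n d) :
    b.mirror ∈ chainAxioms n d := by
  rcases hb with ⟨t, ht, hb⟩ | ⟨t, ht, hb⟩ | ⟨j, hj, t, u, v, ht, hu, hb⟩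
  · refine .inr (.inl ⟨t.map not, by simpa using ht, fun i => ⟨fun h => ?_, fun h => ?_⟩⟩)
    · simp [DyadicBox.mirror, (hb i.rev).1 (by rw [Fin.val_rev]; omega)]
    · simp [DyadicBox.mirror, (hb i.rev).2 (by rw [Fin.val_rev]; omega)]
  · refine .inl ⟨t.map not, by simpa using ht, fun i => ⟨fun h => ?_, fun h => ?_⟩⟩
    · simp [DyadicBox.mirror, (hb i.rev).1 (by rw [Fin.val_rev]; omega)]
    · simp [DyadicBox.mirror, (hb i.rev).2 (by rw [Fin.val_rev]; omega)]
  · refine .inr (.inr ⟨n - 2 - j, by omega, u.map not, t.map not, v, by simpa using hu,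
      by simpa using ht, fun i => ⟨fun h => ?_, fun h => ?_, fun h h' => ?_⟩⟩)
    · simp [DyadicBox.mirror, (hb i.rev).2.1 (by rw [Fin.val_rev]; omega)]
    · simp [DyadicBox.mirror, (hb i.rev).1 (by rw [Fin.val_rev]; omega)]
    · simp [DyadicBox.mirror,
        (hb i.rev).2.2 (by rw [Fin.val_rev]; omega) (by rw [Fin.val_rev]; omega)]

theorem top_cases_of_mem {a : DyadicBox n} (ha : a ∈ chainAxioms n d) {c : Fin n}
    (htop : ∀ i, c < i → a i = []) {y : List Bool} {v : Bool} (hc : a c = y ++ [v]) :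
    ((c : ℕ) = 0 ∧ v = false) ∨ ((c : ℕ) = n - 1 ∧ v = true) ∨
      ∃ c' : Fin n, (c' : ℕ) + 1 = c ∧ ∃ t, a c' = t ++ [!v] ∧ t.length + 1 = d := by
  have hne : a c ≠ [] := by simp [hc]
  rcases ha with ⟨t, -, ha⟩ | ⟨t, -, ha⟩ | ⟨j, hj, t, u, w, ht, -, ha⟩
  · have h0 : (c : ℕ) = 0 := by_contra fun h => hne ((ha c).2 h)
    rw [(ha c).1 h0] at hc
    exact .inl ⟨h0, (List.append_singleton_inj.mp hc).2.symm⟩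
  · have h0 : (c : ℕ) = n - 1 := by_contra fun h => hne ((ha c).2 h)
    rw [(ha c).1 h0] at hc
    exact .inr (.inl ⟨h0, (List.append_singleton_inj.mp hc).2.symm⟩)
  · have hcj : (c : ℕ) = j + 1 := by
      by_contra h
      have hcj : (c : ℕ) = j := by_contra fun h' => hne ((ha c).2.2 h' h)
      have := htop ⟨j + 1, by omega⟩ (Fin.lt_def.mpr (by simp; omega))
      simp [(ha ⟨j + 1, by omega⟩).2.1 rfl] at this
    rw [(ha c).2.1 hcj] at hc
    obtain rfl : v = !w := (List.append_singleton_inj.mp hc).2.symm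
    exact .inr (.inr ⟨⟨j, by omega⟩, hcj.symm, t, by simpa using (ha ⟨j, by omega⟩).1 rfl, ht⟩)

/-- Following the `0`-premises down the proof ends at an axiom `⟨…, t1, u0, λ, …⟩`, and going
back up, coordinate `c'` can only get longer. -/
theorem exists_eq_append_true_of_top_eq_append_false {B : DyadicBox n} {s : ℕ}
    (hB : OrderedTreeProof n (Equiv.refl _) (chainAxioms n d) B s) {c' c : Fin n}
    (hc : (c' : ℕ) + 1 = c) (htop : ∀ i, c < i → B i = []) {y : List Bool}
    (hy : B c = y ++ [false]) : ∃ t, B c' = t ++ [true] ∧ t.length + 1 = d := by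
  induction hB generalizing c' c y with
  | leaf hb =>
    rcases top_cases_of_mem hb htop hy with ⟨h, -⟩ | ⟨-, h⟩ | ⟨c'', hc'', h⟩
    · omega
    · exact absurd h Bool.false_ne_true
    · obtain rfl : c'' = c' := Fin.ext (by omega)
      exact h
  | @node b₁ b₂ B _ _ ℓ p₁ p₂ hres ih₁ _ =>
    have hBd := (OrderedTreeProof.node p₁ p₂ hres).length_le fun _ => length_le_of_mem
    obtain ⟨x, e₁, -, e⟩ : ∃ x, b₁ ℓ = x ++ [false] ∧ b₂ ℓ = x ++ [true] ∧ B ℓ = x := hres.1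
    have hb₁top : ∀ i, ℓ < i → b₁ i = [] := fun i hi => (hres.2.1 i hi).1
    rcases lt_trichotomy ℓ c with hℓ | rfl | hℓ
    · have : B c = [] := (hres.2.1 c hℓ).2.2
      simp [this] at hy
    · obtain ⟨t, ht, htd⟩ := ih₁ hc hb₁top e₁
      have hpre : b₁ c' <+: B c' := (hres.prefix_of_lt (Fin.lt_def.mpr (by omega))).1
      rw [ht] at hpre
      exact ⟨t, (hpre.eq_of_length_le (by simp [htd, hBd])).symm, htd⟩
    · exfalso
      obtain rfl : x = [] := e.symm.trans (htop ℓ hℓ)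
      have hℓ' : (ℓ : ℕ) - 1 < n := by omega
      obtain ⟨t, ht, htd⟩ := ih₁ (c' := ⟨ℓ - 1, hℓ'⟩) (by simp; omega) hb₁top e₁
      have hpre : b₁ ⟨ℓ - 1, hℓ'⟩ <+: B ⟨ℓ - 1, hℓ'⟩ :=
        (hres.prefix_of_lt (Fin.lt_def.mpr (by simp; omega))).1
      rw [ht] at hpre
      rcases eq_or_lt_of_le (show (c : ℕ) ≤ ℓ - 1 by omega) with h | h
      · rw [show (⟨ℓ - 1, hℓ'⟩ : Fin n) = c from Fin.ext h.symm, hy] at hpre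
        have hlen := hBd c
        rw [hy] at hlen
        simpa using hpre.eq_of_length_le (by simp at hlen ⊢; omega)
      · rw [htop _ (Fin.lt_def.mpr h)] at hpre
        simp at hpre

theorem coord_eq_of_resolvent_of_vanishing {b₁ b₂ B : DyadicBox n} {s₁ : ℕ} {ℓ : Fin n}
    (p₁ : OrderedTreeProof n (Equiv.refl _) (chainAxioms n d) b₁ s₁)
    (hres : IsOrderedResolvent n (Equiv.refl _) b₁ b₂ ℓ B) {m : ℕ} (hmℓ : m ≤ ℓ)
    (hB : ∀ i : Fin n, m ≤ i → B i = []) : (ℓ : ℕ) = m := by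
  by_contra hne
  obtain ⟨x, e₁, -, e⟩ := hres.1
  obtain rfl : x = [] := e.symm.trans (hB ℓ hmℓ)
  have hℓ' : (ℓ : ℕ) - 1 < n := by omega
  obtain ⟨t, ht, -⟩ := exists_eq_append_true_of_top_eq_append_false p₁
    (c' := ⟨ℓ - 1, hℓ'⟩) (by simp; omega) (fun i hi => (hres.2.1 i hi).1) e₁
  have hpre : b₁ ⟨ℓ - 1, hℓ'⟩ <+: B ⟨ℓ - 1, hℓ'⟩ :=
    (hres.prefix_of_lt (Fin.lt_def.mpr (by simp; omega))).1
  rw [ht, hB _ (by simp; omega)] at hpre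
  simp at hpre

theorem not_mem_or_not_mem_of_resolvent {b₁ b₂ B : DyadicBox n} {ℓ : Fin n}
    (hres : IsOrderedResolvent n (Equiv.refl _) b₁ b₂ ℓ B) (hℓ : (ℓ : ℕ) ≠ n - 1) :
    b₁ ∉ chainAxioms n d ∨ b₂ ∉ chainAxioms n d := by
  by_contra! ⟨h₁, h₂⟩
  obtain ⟨x, e₁, e₂, -⟩ := hres.1
  rcases top_cases_of_mem h₂ (fun i hi => (hres.2.1 i hi).2.1) e₂ with
    ⟨-, h⟩ | ⟨h, -⟩ | ⟨c, hc, t₂, ht₂, htd₂⟩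
  · exact Bool.false_ne_true h.symm
  · exact hℓ h
  rcases top_cases_of_mem h₁ (fun i hi => (hres.2.1 i hi).1) e₁ with
    ⟨h, -⟩ | ⟨-, h⟩ | ⟨c', hc', t₁, ht₁, htd₁⟩
  · omega
  · exact Bool.false_ne_true h
  obtain rfl : c' = c := Fin.ext (by omega)
  obtain ⟨hpre₁, hpre₂⟩ : b₁ c' <+: B c' ∧ b₂ c' <+: B c' :=
    hres.prefix_of_lt (Fin.lt_def.mpr (by omega))
  rw [ht₁] at hpre₁
  rw [ht₂] at hpre₂
  simpa using (List.prefix_of_prefix_length_le hpre₁ hpre₂ (by simp; omega)).eq_of_length_le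
    (by simp; omega)

/-- `s + 1` counts the leaves. Because of the truncated subtraction, the last summand of the
exponent is `0` when `B ℓ` is full. -/
theorem two_pow_le_size_succ (hd : 2 ≤ d) {B : DyadicBox n} {s : ℕ}
    (hB : OrderedTreeProof n (Equiv.refl _) (chainAxioms n d) B s) {ℓ : Fin n}
    (htop : ∀ i, ℓ < i → B i = []) (hne : B ℓ ≠ []) (hBC : B ∉ chainAxioms n d) :
    2 ^ ((d - 1) * (n - 1 - ℓ) + (d - 1 - (B ℓ).length)) ≤ s + 1 := by
  induction hB generalizing ℓ with
  | leaf hb => exact absurd hb hBC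
  | @node b₁ b₂ B s₁ s₂ c p₁ p₂ hres ih₁ ih₂ =>
    obtain ⟨x, e₁, e₂, e⟩ : ∃ x, b₁ c = x ++ [false] ∧ b₂ c = x ++ [true] ∧ B c = x := hres.1
    have hnot_mem {b : DyadicBox n} {v : Bool} (hb : b c = x ++ [v]) (hx : x.length + 1 < d) :
        b ∉ chainAxioms n d :=
      not_mem_of_length_pos_of_lt (i := c) (by simp [hb]) (by simpa [hb] using hx)
    have i₁ := fun h => ih₁ (fun i hi => (hres.2.1 i hi).1) (by simp [e₁]) h
    have i₂ := fun h => ih₂ (fun i hi => (hres.2.1 i hi).2.1) (by simp [e₂]) h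
    simp only [e₁, e₂, List.length_append, List.length_singleton] at i₁ i₂
    rcases lt_trichotomy c ℓ with hcℓ | rfl | hcℓ
    · exact absurd (hres.2.1 ℓ hcℓ).2.2 hne
    · have hxd : x.length + 1 ≤ d := by
        simpa [e₁] using p₁.length_le (fun _ => length_le_of_mem) c
      rw [e]
      rcases hxd.lt_or_eq with hxd | hxd
      · exact Nat.two_pow_le_add_add_one_add_one (by omega) (i₁ (hnot_mem e₁ hxd))
          (i₂ (hnot_mem e₂ hxd))
      by_cases hcn : (c : ℕ) = n - 1
      · simp [hcn, ← hxd]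
      rcases not_mem_or_not_mem_of_resolvent hres hcn with h | h
      · exact ((Nat.pow_le_pow_right two_pos (by omega)).trans (i₁ h)).trans (by omega)
      · exact ((Nat.pow_le_pow_right two_pos (by omega)).trans (i₂ h)).trans (by omega)
    · obtain rfl : x = [] := e.symm.trans (htop c hcℓ)
      have hfull : (B ℓ).length = d :=
        (hres.nil_or_length_eq_of_lt (fun _ => eq_nil_or_length_eq_of_mem) p₁ p₂ hcℓ).resolve_left
          hne
      have hc : (c : ℕ) = ℓ + 1 := coord_eq_of_resolvent_of_vanishing p₁ hres
        (Fin.lt_def.mp hcℓ) (fun i hi => htop i (Fin.lt_def.mpr hi))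
      have : (d - 1) * (n - 1 - ℓ) = (d - 1) * (n - 1 - c) + (d - 1) := by
        rw [show n - 1 - ℓ = n - 1 - c + 1 by omega, mul_add_one]
      exact Nat.two_pow_le_add_add_one_add_one (by simp; omega)
        (i₁ (hnot_mem e₁ (by simp; omega))) (i₂ (hnot_mem e₂ (by simp; omega)))

theorem two_pow_le_two_mul_size (hn : 0 < n) (hd : 1 ≤ d) {s : ℕ}
    (hB : OrderedTreeProof n (Equiv.refl _) (chainAxioms n d) (fun _ => []) s) :
    2 ^ ((d - 1) * n) ≤ 2 * s := by
  cases hB with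
  | leaf h => exact absurd h (nil_not_mem hn)
  | @node b₁ b₂ _ s₁ s₂ c p₁ p₂ hres =>
    obtain rfl | hd := hd.eq_or_lt
    · simp
      omega
    obtain ⟨e₁, e₂⟩ : b₁ c = [false] ∧ b₂ c = [true] := by simpa using hres.1
    have hc : (c : ℕ) = 0 :=
      coord_eq_of_resolvent_of_vanishing p₁ hres (Nat.zero_le _) fun _ _ => rfl
    have i₁ := two_pow_le_size_succ hd p₁ (fun i hi => (hres.2.1 i hi).1) (by simp [e₁])
      (not_mem_of_length_pos_of_lt (i := c) (by simp [e₁]) (by simp [e₁]; omega))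
    have i₂ := two_pow_le_size_succ hd p₂ (fun i hi => (hres.2.1 i hi).2.1) (by simp [e₂])
      (not_mem_of_length_pos_of_lt (i := c) (by simp [e₂]) (by simp [e₂]; omega))
    rw [e₁, List.length_singleton] at i₁
    rw [e₂, List.length_singleton] at i₂
    have hexp : (d - 1) * n = (d - 1) * (n - 1 - c) + (d - 1) := by
      rw [← mul_add_one]
      congr 1
      omega
    have := Nat.two_pow_le_add_add_one_add_one (e := (d - 1) * n) (by omega) i₁ i₂
    omega

theorem covers_nil (hn : 0 < n) (hd : 1 ≤ d) :
    DyadicBox.Covers d (chainAxioms n d) (fun _ => []) := by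
  intro p hp _
  have hsplit (i : Fin n) : ∃ t v, p i = t ++ [v] ∧ t.length + 1 = d := by
    rcases (p i).eq_nil_or_concat' with h | ⟨t, v, h⟩
    · have := hp i
      simp [h] at this
      omega
    · exact ⟨t, v, h, by simpa [h] using hp i⟩
  choose t v hpv using hsplit
  by_cases h₀ : v ⟨0, hn⟩ = false
  · refine ⟨_, .inl ⟨t ⟨0, hn⟩, (hpv _).2, fun i => ⟨fun h => ?_, fun h => ?_⟩⟩,
      p.contains_ite (· = 0)⟩
    · obtain rfl : i = ⟨0, hn⟩ := Fin.ext h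
      simp [(hpv _).1, h₀]
    · simp [h]
  have hn₁ : n - 1 < n := by omega
  by_cases h₁ : v ⟨n - 1, hn₁⟩ = true
  · refine ⟨_, .inr (.inl ⟨t ⟨n - 1, hn₁⟩, (hpv _).2, fun i => ⟨fun h => ?_, fun h => ?_⟩⟩),
      p.contains_ite (· = n - 1)⟩
    · obtain rfl : i = ⟨n - 1, hn₁⟩ := Fin.ext h
      simp [(hpv _).1, h₁]
    · simp [h]
  obtain ⟨j, hj, hne⟩ := exists_ne_succ_of_ne (fun k => v ⟨min k (n - 1), by omega⟩) (k := n - 1)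
    (by simp_all)
  have hj₀ : j < n := by omega
  have hj₁ : j + 1 < n := by omega
  simp only [show min j (n - 1) = j by omega, show min (j + 1) (n - 1) = j + 1 by omega] at hne
  refine ⟨_, .inr (.inr ⟨j, hj₁, t ⟨j, hj₀⟩, t ⟨j + 1, hj₁⟩, v ⟨j, hj₀⟩,
    (hpv _).2, (hpv _).2, fun i => ⟨fun h => ?_, fun h => ?_, fun h h' => ?_⟩⟩),
    p.contains_ite (fun k => k = j ∨ k = j + 1)⟩
  · obtain rfl : i = ⟨j, hj₀⟩ := Fin.ext h
    simp [(hpv _).1]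
  · obtain rfl : i = ⟨j + 1, hj₁⟩ := Fin.ext h
    simp [(hpv _).1, Bool.eq_not_of_ne (Ne.symm hne)]
  · simp [h, h']

theorem ncard_chainAxioms_le (hn : 0 < n) :
    (chainAxioms n d).ncard ≤ n * (2 ^ d + 1) ^ 2 := by
  let g : Fin n × Option (Fin d → Bool) × Option (Fin d → Bool) → DyadicBox n :=
    fun q i => if (i : ℕ) = q.1 then q.2.1.elim [] List.ofFn
      else if (i : ℕ) = q.1 + 1 then q.2.2.elim [] List.ofFn else []
  have hsub : chainAxioms n d ⊆ Set.range g := by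
    rintro b (⟨t, ht, hb⟩ | ⟨t, ht, hb⟩ | ⟨j, hj, t, u, v, ht, hu, hb⟩)
    · obtain ⟨f, hf⟩ := List.exists_ofFn_eq (l := t ++ [false]) (by simpa)
      refine ⟨(⟨0, hn⟩, some f, none), funext fun i => ?_⟩
      by_cases h : (i : ℕ) = 0 <;> simp [g, h, hb, hf]
    · obtain ⟨f, hf⟩ := List.exists_ofFn_eq (l := t ++ [true]) (by simpa)
      refine ⟨(⟨n - 1, by omega⟩, some f, none), funext fun i => ?_⟩
      by_cases h : (i : ℕ) = n - 1 <;> simp [g, h, hb, hf]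
    · obtain ⟨f, hf⟩ := List.exists_ofFn_eq (l := t ++ [v]) (by simpa)
      obtain ⟨f', hf'⟩ := List.exists_ofFn_eq (l := u ++ [!v]) (by simpa)
      refine ⟨(⟨j, by omega⟩, some f, some f'), funext fun i => ?_⟩
      by_cases h : (i : ℕ) = j
      · simp [g, h, hb, hf]
      by_cases h' : (i : ℕ) = j + 1 <;> simp [g, h, h', hb, hf']
  calc (chainAxioms n d).ncard ≤ (Set.range g).ncard := Set.ncard_le_ncard hsub
    _ = Nat.card (Set.range g) := (Nat.card_coe_set_eq _).symm
    _ ≤ Nat.card (Fin n × Option (Fin d → Bool) × Option (Fin d → Bool)) :=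
      Finite.card_range_le g
    _ = n * (2 ^ d + 1) ^ 2 := by simp [Nat.card_eq_fintype_card, sq]

theorem mul_rpow_half_le {N s : ℕ} (hn : 0 < n) (hd : 1 ≤ d) (hN : N ≤ n * (2 ^ d + 1) ^ 2)
    (hs : 2 ^ ((d - 1) * n) ≤ 2 * s) :
    1 / (2 * (4 * √n) ^ n) * (N : ℝ) ^ ((n : ℝ) / 2) ≤ s := by
  have hsqrt : 0 < √(n : ℝ) := Real.sqrt_pos.mpr (by exact_mod_cast hn)
  have hN' : √(N : ℝ) ≤ 4 * √n * 2 ^ (d - 1) := by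
    refine Real.sqrt_le_iff.mpr ⟨by positivity, ?_⟩
    have h2d : (2 : ℝ) ^ d = 2 * 2 ^ (d - 1) := by rw [← pow_succ']; congr 1; omega
    calc (N : ℝ) ≤ n * (2 ^ d + 1) ^ 2 := by exact_mod_cast hN
      _ ≤ n * (4 * 2 ^ (d - 1)) ^ 2 := by
        gcongr
        linarith [one_le_pow₀ (M₀ := ℝ) one_le_two (n := d - 1)]
      _ = (4 * √n * 2 ^ (d - 1)) ^ 2 := by
        rw [mul_pow, mul_pow, mul_pow, Real.sq_sqrt (Nat.cast_nonneg _)]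
        ring
  have hpow : (N : ℝ) ^ ((n : ℝ) / 2) = √N ^ n := by
    rw [Real.sqrt_eq_rpow, ← Real.rpow_natCast, ← Real.rpow_mul (Nat.cast_nonneg _)]
    ring_nf
  have hs' : (2 : ℝ) ^ ((d - 1) * n) ≤ 2 * s := by exact_mod_cast hs
  rw [hpow, one_div, inv_mul_le_iff₀ (by positivity)]
  calc √(N : ℝ) ^ n ≤ (4 * √n * 2 ^ (d - 1)) ^ n := pow_le_pow_left₀ (Real.sqrt_nonneg _) hN' n
    _ = (4 * √n) ^ n * 2 ^ ((d - 1) * n) := by rw [mul_pow, pow_mul]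
    _ ≤ 2 * (4 * √n) ^ n * s := by nlinarith [pow_pos (mul_pos four_pos hsqrt) n]

end TreeOrderedResolution

/-- Tree ordered geometric resolution lower bound: for every `n > 1` there is
an `α > 0` (depending only on `n`) such that for every bit depth `d ≥ 1`, the
explicit set `C` of boxes described below covers the universal box, yet every
tree ordered geometric resolution proof of the universal box from `C` — with
respect to the coordinate order `(1,…,n)` or its reverse — has at least
`α·N^{n/2}` internal nodes, where `N = |C|`.  Here `C` consists of: all boxes
whose first component is a length-`d` string ending in `0` and whose other
components are `λ`; all boxes whose last component is a length-`d` string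
ending in `1` and whose other components are `λ`; and, for each pair of
consecutive coordinates, all boxes whose two components there are length-`d`
strings with complementary last bits and whose other components are `λ`. -/
theorem tree_ordered_resolution_lower_bound (n : ℕ) (hn : 1 < n) :
    ∃ α : ℝ, 0 < α ∧ ∀ d : ℕ, 1 ≤ d → ∀ C : Set (DyadicBox n),
      (∀ b : DyadicBox n, b ∈ C ↔
        ((∃ t : List Bool, t.length + 1 = d ∧
            ∀ i : Fin n, ((i : ℕ) = 0 → b i = t ++ [false]) ∧
              ((i : ℕ) ≠ 0 → b i = [])) ∨
         (∃ t : List Bool, t.length + 1 = d ∧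
            ∀ i : Fin n, ((i : ℕ) = n - 1 → b i = t ++ [true]) ∧
              ((i : ℕ) ≠ n - 1 → b i = [])) ∨
         (∃ j : ℕ, j + 2 ≤ n ∧ ∃ t u : List Bool, ∃ v : Bool,
            t.length + 1 = d ∧ u.length + 1 = d ∧
            ∀ i : Fin n, ((i : ℕ) = j → b i = t ++ [v]) ∧
              ((i : ℕ) = j + 1 → b i = u ++ [!v]) ∧
              ((i : ℕ) ≠ j → (i : ℕ) ≠ j + 1 → b i = [])))) →
      DyadicBox.Covers d C (fun _ => []) ∧
      (∀ s : ℕ,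
        OrderedTreeProof n (Equiv.refl (Fin n)) C (fun _ => []) s →
        α * (C.ncard : ℝ) ^ ((n : ℝ) / 2) ≤ (s : ℝ)) ∧
      (∀ s : ℕ,
        OrderedTreeProof n Fin.revPerm C (fun _ => []) s →
        α * (C.ncard : ℝ) ^ ((n : ℝ) / 2) ≤ (s : ℝ)) := by
  have hn₀ : 0 < n := by omega
  have hsqrt : 0 < √(n : ℝ) := Real.sqrt_pos.mpr (by exact_mod_cast hn₀)
  refine ⟨1 / (2 * (4 * √n) ^ n), by positivity, fun d hd C hC => ?_⟩
  obtain rfl : C = TreeOrderedResolution.chainAxioms n d := Set.ext hC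
  have hsize {s : ℕ} (hs : 2 ^ ((d - 1) * n) ≤ 2 * s) :=
    TreeOrderedResolution.mul_rpow_half_le hn₀ hd
      (TreeOrderedResolution.ncard_chainAxioms_le hn₀) hs
  refine ⟨TreeOrderedResolution.covers_nil hn₀ hd,
    fun s hB => hsize (TreeOrderedResolution.two_pow_le_two_mul_size hn₀ hd hB),
    fun s hB => hsize (TreeOrderedResolution.two_pow_le_two_mul_size hn₀ hd ?_)⟩
  exact hB.mirror fun _ => TreeOrderedResolution.mirror_mem
end

section
/- There exists an absolute constant K such that for every integer d ≥ 1, setting M = 2^d, the following clause set F over the 3d propositional variables a_0,…,a_{d−1}, b_0,…,b_{d−1}, c_0,…,c_{d−1} has a propositional resolution refutation with at most K·M² resolution steps: F consists of the clauses ¬A_i ∪ ¬B_j, ¬B_i ∪ ¬C_j, and ¬A_i ∪ ¬C_j for all pairs (i, j) with 0 ≤ i, j < M such that i and j are both odd or both even (here ¬A_i, ¬B_i, ¬C_i are the clauses encoding 'the a-variables, b-variables, c-variables do not spell the binary representation of i', respectively). -/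
/-- A clause over variables `V`: a finite set of literals, a literal being a
variable together with a polarity (`true` = positive). -/
abbrev PropClause (V : Type) := Finset (V × Bool)

/-- `R` is the propositional resolvent of `C₁` and `C₂` on some variable `v`
with `v ∈ C₁` and `¬v ∈ C₂`. -/
def IsPropResolvent {V : Type} [DecidableEq V] (C₁ C₂ R : PropClause V) : Prop :=
  ∃ v : V, (v, true) ∈ C₁ ∧ (v, false) ∈ C₂ ∧
    R = (C₁.erase (v, true)) ∪ (C₂.erase (v, false))

/-- A (tagged) propositional resolution derivation from a clause set `F`: an
entry tagged `true` is the resolvent of two earlier entries; an entry tagged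
`false` belongs to `F`. -/
def IsPropDerivation {V : Type} [DecidableEq V] (F : Set (PropClause V))
    (L : List (Bool × PropClause V)) : Prop :=
  ∀ k : Fin L.length,
    if (L.get k).1 then
      ∃ i j : Fin L.length, (i : ℕ) < (k : ℕ) ∧ (j : ℕ) < (k : ℕ) ∧
        IsPropResolvent ((L.get i).2) ((L.get j).2) ((L.get k).2)
    else (L.get k).2 ∈ F

/-- The clause `¬A_i` over the `g`-th group of `d` variables: for each bit
position `j < d` it contains the literal `¬x_j` if the `j`-th bit of `i` is `1`
and the literal `x_j` if it is `0` (group `0` = a-variables, `1` = b-variables,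
`2` = c-variables). -/
def negClause (g : Fin 3) (d i : ℕ) : PropClause (Fin 3 × ℕ) :=
  (Finset.range d).image (fun j => ((g, j), ! i.testBit j))

/-- The clause set encoding the triangle-join instance: the clauses
`¬A_i ∪ ¬B_j`, `¬B_i ∪ ¬C_j`, `¬A_i ∪ ¬C_j` for all `i, j < 2^d` of equal
parity. -/
def triangleCNF (d : ℕ) : Set (PropClause (Fin 3 × ℕ)) :=
  {c | ∃ i j : ℕ, i < 2 ^ d ∧ j < 2 ^ d ∧ i % 2 = j % 2 ∧
    (c = negClause 0 d i ∪ negClause 1 d j ∨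
     c = negClause 1 d i ∪ negClause 2 d j ∨
     c = negClause 0 d i ∪ negClause 2 d j)}

namespace Tri

variable {V : Type} [DecidableEq V] {F : Set (PropClause V)}

def Prov (F : Set (PropClause V)) (n : ℕ) (C : PropClause V) : Prop :=
  ∃ L : List (Bool × PropClause V), IsPropDerivation F L ∧ C ∈ L.map (·.2) ∧
    (L.filter (·.1)).length ≤ n

theorem prov_mono {n m : ℕ} {C : PropClause V} (h : Prov F n C) (hnm : n ≤ m) :
    Prov F m C := by
  obtain ⟨L, h1, h2, h3⟩ := h
  exact ⟨L, h1, h2, h3.trans hnm⟩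

theorem prov_ax {C : PropClause V} {n : ℕ} (h : C ∈ F) : Prov F n C := by
  refine ⟨[(false, C)], ?_, by simp, by simp⟩
  intro k
  have hk : (k : ℕ) = 0 := Nat.lt_one_iff.mp (by simpa using k.2)
  have : k = (⟨0, by simp⟩ : Fin 1) := by
    apply Fin.ext; simpa using hk
  subst this
  simpa using h

theorem der_append {L₁ L₂ : List (Bool × PropClause V)}
    (h₁ : IsPropDerivation F L₁) (h₂ : IsPropDerivation F L₂) :
    IsPropDerivation F (L₁ ++ L₂) := by
  intro k
  have hklen : (k : ℕ) < L₁.length + L₂.length := by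
    have := k.2; simpa using this
  rcases lt_or_ge (k : ℕ) L₁.length with hk | hk
  · have hget : (L₁ ++ L₂).get k = L₁.get ⟨k, hk⟩ := by
      simp [List.get_eq_getElem, List.getElem_append_left hk]
    rw [hget]
    have hh := h₁ ⟨k, hk⟩
    by_cases htag : (L₁.get ⟨(k : ℕ), hk⟩).1 = true
    · rw [if_pos htag]
      rw [if_pos htag] at hh
      obtain ⟨i, j, hi, hj, hres⟩ := hh
      have hilen : (i : ℕ) < (L₁ ++ L₂).length := by simp; omega
      have hjlen : (j : ℕ) < (L₁ ++ L₂).length := by simp; omega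
      refine ⟨⟨i, hilen⟩, ⟨j, hjlen⟩, hi, hj, ?_⟩
      have hgi : (L₁ ++ L₂).get ⟨i, hilen⟩ = L₁.get i := by
        simp [List.get_eq_getElem, List.getElem_append_left i.2]
      have hgj : (L₁ ++ L₂).get ⟨j, hjlen⟩ = L₁.get j := by
        simp [List.get_eq_getElem, List.getElem_append_left j.2]
      rw [hgi, hgj]; exact hres
    · rw [if_neg htag]; rw [if_neg htag] at hh; exact hh
  · have hk2 : (k : ℕ) - L₁.length < L₂.length := by omega
    have hget : (L₁ ++ L₂).get k = L₂.get ⟨(k : ℕ) - L₁.length, hk2⟩ := by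
      simp [List.get_eq_getElem, List.getElem_append_right hk]
    rw [hget]
    have hh := h₂ ⟨(k : ℕ) - L₁.length, hk2⟩
    by_cases htag : (L₂.get ⟨(k : ℕ) - L₁.length, hk2⟩).1 = true
    · rw [if_pos htag]
      rw [if_pos htag] at hh
      obtain ⟨i, j, hi, hj, hres⟩ := hh
      have hi' : (i : ℕ) < (k : ℕ) - L₁.length := hi
      have hj' : (j : ℕ) < (k : ℕ) - L₁.length := hj
      have hilen : L₁.length + (i : ℕ) < (L₁ ++ L₂).length := by
        have := i.2; simp only [List.length_append]; omega
      have hjlen : L₁.length + (j : ℕ) < (L₁ ++ L₂).length := by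
        have := j.2; simp only [List.length_append]; omega
      refine ⟨⟨L₁.length + i, hilen⟩, ⟨L₁.length + j, hjlen⟩, by simp only [Fin.val_mk]; omega,
        by simp only [Fin.val_mk]; omega, ?_⟩
      have hgi : (L₁ ++ L₂).get ⟨L₁.length + i, hilen⟩ = L₂.get i := by
        simp [List.get_eq_getElem, List.getElem_append_right (Nat.le_add_right _ _)]
      have hgj : (L₁ ++ L₂).get ⟨L₁.length + j, hjlen⟩ = L₂.get j := by
        simp [List.get_eq_getElem, List.getElem_append_right (Nat.le_add_right _ _)]
      rw [hgi, hgj]; exact hres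
    · rw [if_neg htag]; rw [if_neg htag] at hh; exact hh

theorem der_push_res {L : List (Bool × PropClause V)} {C₁ C₂ R : PropClause V}
    (h : IsPropDerivation F L) (h₁ : C₁ ∈ L.map (·.2)) (h₂ : C₂ ∈ L.map (·.2))
    (hr : IsPropResolvent C₁ C₂ R) :
    IsPropDerivation F (L ++ [(true, R)]) := by
  obtain ⟨p₁, hp₁, he₁⟩ := List.mem_map.1 h₁
  obtain ⟨p₂, hp₂, he₂⟩ := List.mem_map.1 h₂
  obtain ⟨i, hi⟩ := List.mem_iff_get.1 hp₁
  obtain ⟨j, hj⟩ := List.mem_iff_get.1 hp₂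
  intro k
  have hklen : (k : ℕ) < L.length + 1 := by have := k.2; simpa using this
  rcases lt_or_ge (k : ℕ) L.length with hk | hk
  · -- same as first branch of der_append with L₂ = [(true,R)]
    have hget : (L ++ [(true, R)]).get k = L.get ⟨k, hk⟩ := by
      simp [List.get_eq_getElem, List.getElem_append_left hk]
    rw [hget]
    have hh := h ⟨k, hk⟩
    by_cases htag : (L.get ⟨(k : ℕ), hk⟩).1 = true
    · rw [if_pos htag]
      rw [if_pos htag] at hh
      obtain ⟨i', j', hi', hj', hres⟩ := hh
      have hilen : (i' : ℕ) < (L ++ [(true, R)]).length := by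
        have := i'.2; simp
      have hjlen : (j' : ℕ) < (L ++ [(true, R)]).length := by
        have := j'.2; simp
      refine ⟨⟨i', hilen⟩, ⟨j', hjlen⟩, hi', hj', ?_⟩
      have hgi : (L ++ [(true, R)]).get ⟨i', hilen⟩ = L.get i' := by
        simp [List.get_eq_getElem, List.getElem_append_left i'.2]
      have hgj : (L ++ [(true, R)]).get ⟨j', hjlen⟩ = L.get j' := by
        simp [List.get_eq_getElem, List.getElem_append_left j'.2]
      rw [hgi, hgj]; exact hres
    · rw [if_neg htag]; rw [if_neg htag] at hh; exact hh
  · have hkeq : (k : ℕ) = L.length := by omega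
    have hget : (L ++ [(true, R)]).get k = (true, R) := by
      simp [List.get_eq_getElem, List.getElem_append_right hk, hkeq]
    rw [hget]
    rw [if_pos rfl]
    have hilen : (i : ℕ) < (L ++ [(true, R)]).length := by
      have := i.2; simp
    have hjlen : (j : ℕ) < (L ++ [(true, R)]).length := by
      have := j.2; simp
    refine ⟨⟨i, hilen⟩, ⟨j, hjlen⟩, by have := i.2; simp only [Fin.val_mk]; omega,
      by have := j.2; simp only [Fin.val_mk]; omega, ?_⟩
    have hgi : (L ++ [(true, R)]).get ⟨i, hilen⟩ = L.get i := by
      simp [List.get_eq_getElem, List.getElem_append_left i.2]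
    have hgj : (L ++ [(true, R)]).get ⟨j, hjlen⟩ = L.get j := by
      simp [List.get_eq_getElem, List.getElem_append_left j.2]
    rw [hgi, hgj, hi, hj, he₁, he₂]
    exact hr

theorem prov_res {n₁ n₂ : ℕ} {C₁ C₂ R : PropClause V}
    (h₁ : Prov F n₁ C₁) (h₂ : Prov F n₂ C₂) (hr : IsPropResolvent C₁ C₂ R) :
    Prov F (n₁ + n₂ + 1) R := by
  obtain ⟨L₁, hd₁, hm₁, hc₁⟩ := h₁
  obtain ⟨L₂, hd₂, hm₂, hc₂⟩ := h₂
  refine ⟨(L₁ ++ L₂) ++ [(true, R)], ?_, ?_, ?_⟩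
  · refine der_push_res (der_append hd₁ hd₂) ?_ ?_ hr
    · rw [List.map_append]; exact List.mem_append_left _ hm₁
    · rw [List.map_append]; exact List.mem_append_right _ hm₂
  · simp
  · simp only [List.filter_append, List.length_append]
    simp only [List.filter, List.length]
    omega

end Tri

namespace Tri

/-- Partial negation clause: literals on bit positions `s, s+1, …, s+e-1` of
group `g`, spelling "not the binary rep of `t`" (bit `j` of `t` at position `s+j`). -/
def P (g : Fin 3) (s e t : ℕ) : PropClause (Fin 3 × ℕ) :=
  (Finset.range e).image (fun j => ((g, s + j), ! t.testBit j))

lemma P_zero (g : Fin 3) (s t : ℕ) : P g s 0 t = ∅ := by simp [P]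

lemma P_succ (g : Fin 3) (s e t : ℕ) :
    P g s (e + 1) t = insert ((g, s + e), ! t.testBit e) (P g s e t) := by
  simp [P, Finset.range_add_one, Finset.image_insert]

lemma mem_P {g : Fin 3} {s e t : ℕ} {x : (Fin 3 × ℕ) × Bool} (hx : x ∈ P g s e t) :
    x.1.1 = g ∧ s ≤ x.1.2 ∧ x.1.2 < s + e := by
  obtain ⟨j, hj, rfl⟩ := Finset.mem_image.1 hx
  simp at hj ⊢
  omega

lemma P_congr {g : Fin 3} {s e : ℕ} {t t' : ℕ}
    (h : ∀ j < e, t.testBit j = t'.testBit j) : P g s e t = P g s e t' := by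
  unfold P
  apply Finset.image_congr
  intro j hj
  simp only [Finset.mem_coe, Finset.mem_range] at hj
  simp only [h j hj]

variable {F : Set (PropClause (Fin 3 × ℕ))}

/-- The cube lemma: resolve away all `e` bits of group `g` at offset `s`. -/
lemma prov_cube (g : Fin 3) (s : ℕ) :
    ∀ (e : ℕ) (n : ℕ) (D : PropClause (Fin 3 × ℕ)),
    (∀ (j : ℕ) (b : Bool), ((g, s + j), b) ∉ D) →
    (∀ t < 2 ^ e, Prov F n (D ∪ P g s e t)) →
    Prov F (2 ^ e * (n + 1)) D := by
  intro e
  induction e with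
  | zero =>
    intro n D _ hleaf
    have := hleaf 0 (by norm_num)
    rw [P_zero, Finset.union_empty] at this
    exact prov_mono this (by omega)
  | succ e ih =>
    intro n D hD hleaf
    refine prov_mono (ih (2 * n + 1) D hD ?_) (by ring_nf; omega)
    intro t ht
    have ht1 : t < 2 ^ (e + 1) := by
      have : (2:ℕ) ^ (e+1) = 2 ^ e * 2 := by ring
      omega
    have ht2 : t + 2 ^ e < 2 ^ (e + 1) := by
      have : (2:ℕ) ^ (e+1) = 2 ^ e * 2 := by ring
      omega
    have h1 := hleaf t ht1
    have h2 := hleaf (t + 2 ^ e) ht2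
    -- rewrite the two leaves
    have e1 : P g s (e + 1) t = insert ((g, s + e), true) (P g s e t) := by
      rw [P_succ, Nat.testBit_eq_false_of_lt ht]; rfl
    have e2 : P g s (e + 1) (t + 2 ^ e) = insert ((g, s + e), false) (P g s e t) := by
      rw [P_succ]
      have hbit : (t + 2 ^ e).testBit e = true := by
        rw [Nat.add_comm, Nat.testBit_two_pow_add_eq, Nat.testBit_eq_false_of_lt ht]; rfl
      rw [hbit]
      congr 1
      apply P_congr
      intro j hj
      rw [Nat.add_comm t, Nat.testBit_two_pow_add_gt hj]
    rw [e1] at h1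
    rw [e2] at h2
    have hnot : ∀ b : Bool, ((g, s + e), b) ∉ D ∪ P g s e t := by
      intro b hb
      rcases Finset.mem_union.1 hb with hb | hb
      · exact hD e b hb
      · have := (mem_P hb).2.2
        simp at this
    have hres : IsPropResolvent (D ∪ insert ((g, s + e), true) (P g s e t))
        (D ∪ insert ((g, s + e), false) (P g s e t)) (D ∪ P g s e t) := by
      refine ⟨(g, s + e), by simp, by simp, ?_⟩
      rw [Finset.union_insert, Finset.union_insert,
        Finset.erase_insert (hnot true), Finset.erase_insert (hnot false),
        Finset.union_self]
    have := prov_res h1 h2 hres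
    exact prov_mono this (by omega)

end Tri

namespace Tri

lemma mem_negClause {g : Fin 3} {d i : ℕ} {x : (Fin 3 × ℕ) × Bool}
    (hx : x ∈ negClause g d i) : x.1.1 = g := by
  obtain ⟨j, _, rfl⟩ := Finset.mem_image.1 hx
  rfl

lemma P_succ_bot (g : Fin 3) (s e t : ℕ) :
    P g s (e + 1) t = insert ((g, s), ! t.testBit 0) (P g (s + 1) e (t / 2)) := by
  ext x
  simp only [P, Finset.mem_image, Finset.mem_insert, Finset.mem_range]
  constructor
  · rintro ⟨j, hj, rfl⟩
    cases j with
    | zero => left; simp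
    | succ j =>
      right
      refine ⟨j, by omega, ?_⟩
      have h1 : s + (j + 1) = s + 1 + j := by omega
      have h2 : t.testBit (j + 1) = (t / 2).testBit j := Nat.testBit_succ t j
      rw [h1, h2]
  · rintro (rfl | ⟨j, hj, rfl⟩)
    · exact ⟨0, by omega, by simp⟩
    · refine ⟨j + 1, by omega, ?_⟩
      have h1 : s + (j + 1) = s + 1 + j := by omega
      have h2 : t.testBit (j + 1) = (t / 2).testBit j := Nat.testBit_succ t j
      rw [h1, h2]

lemma negClause_decomp (g : Fin 3) {d : ℕ} (hd : 1 ≤ d) (i : ℕ) :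
    negClause g d i = insert ((g, 0), ! i.testBit 0) (P g 1 (d - 1) (i / 2)) := by
  have hde : d = (d - 1) + 1 := by omega
  have h0 : negClause g d i = P g 0 d i := by
    unfold negClause P
    apply Finset.image_congr
    intro j _
    simp
  rw [h0, hde, P_succ_bot]
  norm_num

variable {F : Set (PropClause (Fin 3 × ℕ))}

lemma stage1 {d : ℕ} (hd : 1 ≤ d) (g h : Fin 3) (hgh : g ≠ h)
    (hax : ∀ i j : ℕ, i < 2 ^ d → j < 2 ^ d → i % 2 = j % 2 →
      negClause g d i ∪ negClause h d j ∈ F)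
    (i : ℕ) (hi : i < 2 ^ d) :
    Prov F (2 ^ (d - 1)) (insert ((h, 0), ! i.testBit 0) (negClause g d i)) := by
  have hcube := prov_cube (F := F) h 1 (d - 1) 0
    (insert ((h, 0), ! i.testBit 0) (negClause g d i)) ?_ ?_
  · exact prov_mono hcube (by omega)
  · intro j b hb
    rcases Finset.mem_insert.1 hb with hb | hb
    · simp at hb
    · have := mem_negClause hb
      simp at this
      exact hgh this.symm
  · intro t ht
    apply prov_ax
    have h2d : 2 ^ d = 2 ^ (d - 1) * 2 := by
      rw [← pow_succ]
      congr 1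
      omega
    have hj : 2 * t + i % 2 < 2 ^ d := by omega
    have hpar : i % 2 = (2 * t + i % 2) % 2 := by omega
    have hmem := hax i (2 * t + i % 2) hi hj hpar
    have heq : negClause h d (2 * t + i % 2)
        = insert ((h, 0), ! i.testBit 0) (P h 1 (d - 1) t) := by
      rw [negClause_decomp h hd]
      have hdiv : (2 * t + i % 2) / 2 = t := by omega
      have hbit : (2 * t + i % 2).testBit 0 = i.testBit 0 := by
        rw [Nat.testBit_zero, Nat.testBit_zero]
        have : (2 * t + i % 2) % 2 = i % 2 := by omega
        rw [this]
      rw [hdiv, hbit]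
    rw [heq, Finset.union_insert, ← Finset.insert_union] at hmem
    exact hmem

lemma stage2 {d : ℕ} (hd : 1 ≤ d) (g h : Fin 3) (hgh : g ≠ h)
    (hax : ∀ i j : ℕ, i < 2 ^ d → j < 2 ^ d → i % 2 = j % 2 →
      negClause g d i ∪ negClause h d j ∈ F)
    (p : ℕ) (hp : p < 2) :
    Prov F (2 ^ (d - 1) * (2 ^ (d - 1) + 1))
      ({((h, 0), ! p.testBit 0), ((g, 0), ! p.testBit 0)} : PropClause (Fin 3 × ℕ)) := by
  apply prov_cube (F := F) g 1 (d - 1) (2 ^ (d - 1))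
  · intro j b hb
    rcases Finset.mem_insert.1 hb with hb | hb
    · simp at hb
    · rw [Finset.mem_singleton] at hb
      simp at hb
  · intro u hu
    have h2d : 2 ^ d = 2 ^ (d - 1) * 2 := by
      rw [← pow_succ]; congr 1; omega
    have hi : 2 * u + p < 2 ^ d := by omega
    have hbit : (2 * u + p).testBit 0 = p.testBit 0 := by
      rw [Nat.testBit_zero, Nat.testBit_zero]
      have : (2 * u + p) % 2 = p % 2 := by omega
      have hpp : p % 2 = p := by omega
      rw [this, hpp]
    have hs1 := stage1 hd g h hgh hax (2 * u + p) hi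
    rw [hbit] at hs1
    have heq : insert ((h, 0), ! p.testBit 0) (negClause g d (2 * u + p))
        = ({((h, 0), ! p.testBit 0), ((g, 0), ! p.testBit 0)} : PropClause (Fin 3 × ℕ))
          ∪ P g 1 (d - 1) u := by
      rw [negClause_decomp g hd, hbit]
      have hdiv : (2 * u + p) / 2 = u := by omega
      rw [hdiv]
      ext x; simp
    rw [heq] at hs1
    exact hs1

end Tri


open Tri in
/-- There is an absolute constant `K` such that for every `d ≥ 1` and
`M = 2^d`, the triangle clause set has a propositional resolution refutation
with at most `K·M²` resolution steps. -/
theorem triangle_CNF_short_refutation :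
    ∃ K : ℕ, ∀ d : ℕ, 1 ≤ d →
      ∃ L : List (Bool × PropClause (Fin 3 × ℕ)),
        IsPropDerivation (triangleCNF d) L ∧
        (∅ : PropClause (Fin 3 × ℕ)) ∈ L.map (·.2) ∧
        (L.filter (·.1)).length ≤ K * (2 ^ d) ^ 2 := by
  refine ⟨8, ?_⟩
  intro d hd
  have haxAB : ∀ i j : ℕ, i < 2 ^ d → j < 2 ^ d → i % 2 = j % 2 →
      negClause 0 d i ∪ negClause 1 d j ∈ triangleCNF d :=
    fun i j hi hj hp => ⟨i, j, hi, hj, hp, Or.inl rfl⟩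
  have haxBC : ∀ i j : ℕ, i < 2 ^ d → j < 2 ^ d → i % 2 = j % 2 →
      negClause 1 d i ∪ negClause 2 d j ∈ triangleCNF d :=
    fun i j hi hj hp => ⟨i, j, hi, hj, hp, Or.inr (Or.inl rfl)⟩
  have haxAC : ∀ i j : ℕ, i < 2 ^ d → j < 2 ^ d → i % 2 = j % 2 →
      negClause 0 d i ∪ negClause 2 d j ∈ triangleCNF d :=
    fun i j hi hj hp => ⟨i, j, hi, hj, hp, Or.inr (Or.inr rfl)⟩
  set n₂ : ℕ := 2 ^ (d - 1) * (2 ^ (d - 1) + 1) with hn₂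
  have hAB0 := stage2 hd 0 1 (by decide) haxAB 0 (by norm_num)
  have hAB1 := stage2 hd 0 1 (by decide) haxAB 1 (by norm_num)
  have hBC0 := stage2 hd 1 2 (by decide) haxBC 0 (by norm_num)
  have hBC1 := stage2 hd 1 2 (by decide) haxBC 1 (by norm_num)
  have hAC0 := stage2 hd 0 2 (by decide) haxAC 0 (by norm_num)
  have hAC1 := stage2 hd 0 2 (by decide) haxAC 1 (by norm_num)
  simp only [show Nat.testBit 0 0 = false by norm_num [Nat.testBit_zero],
    show Nat.testBit 1 0 = true by norm_num [Nat.testBit_zero],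
    Bool.not_false, Bool.not_true] at hAB0 hAB1 hBC0 hBC1 hAC0 hAC1
  have hR1 : Prov (triangleCNF d) (n₂ + n₂ + 1)
      ({((1, 0), true), ((2, 0), false)} : PropClause (Fin 3 × ℕ)) :=
    prov_res hAB0 hAC1 ⟨((0 : Fin 3), 0), by decide, by decide, by decide⟩
  have hR2 : Prov (triangleCNF d) ((n₂ + n₂ + 1) + n₂ + 1)
      ({((2, 0), false)} : PropClause (Fin 3 × ℕ)) :=
    prov_res hR1 hBC1 ⟨((1 : Fin 3), 0), by decide, by decide, by decide⟩
  have hR3 : Prov (triangleCNF d) (n₂ + n₂ + 1)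
      ({((2, 0), true), ((1, 0), false)} : PropClause (Fin 3 × ℕ)) :=
    prov_res hAC0 hAB1 ⟨((0 : Fin 3), 0), by decide, by decide, by decide⟩
  have hR4 : Prov (triangleCNF d) (n₂ + (n₂ + n₂ + 1) + 1)
      ({((2, 0), true)} : PropClause (Fin 3 × ℕ)) :=
    prov_res hBC0 hR3 ⟨((1 : Fin 3), 0), by decide, by decide, by decide⟩
  have hR5 : Prov (triangleCNF d) ((n₂ + (n₂ + n₂ + 1) + 1) + ((n₂ + n₂ + 1) + n₂ + 1) + 1)
      (∅ : PropClause (Fin 3 × ℕ)) :=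
    prov_res hR4 hR2 ⟨((2 : Fin 3), 0), by decide, by decide, by decide⟩
  have hfinal := prov_mono hR5 (show _ ≤ 8 * (2 ^ d) ^ 2 by
    have h2d : 2 ^ d = 2 * 2 ^ (d - 1) := by
      rw [← pow_succ']
      congr 1
      omega
    have hx : 1 ≤ 2 ^ (d - 1) := Nat.one_le_two_pow
    rw [hn₂, h2d]
    nlinarith [sq_nonneg (2 ^ (d - 1))])
  obtain ⟨L, hL1, hL2, hL3⟩ := hfinal
  exact ⟨L, hL1, hL2, hL3⟩
end
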